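/- arXiv:0912.1749 — 6 statements merged into one kernel-verified Lean document; each statement's English description precedes it below -/
import Mathlib

section
/- Let q = 4, λ = √2, and α ∈ (1/2, 1/√2). Set τ_0 = −1/((α+1)√2), τ_k = −1/(2√2 + τ_{k−1}) for k ≥ 1, and c_k = (√2−1)/(1 + τ_{k−1}·(√2−1)) for k ≥ 1. Then there exists a positive integer K such that for every G_q-irrational x ∈ [(α−1)√2, α√2) and all integers n ≥ 1 and k > K one has min{Θ_{n−1}(x), Θ_n(x), …, Θ_{n+k}(x)} < c_k. Moreover c_{k+1} < c_k for every k ≥ 1, and lim_{k→∞} c_k = 1/2. -/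
/-- The digit `d(x) = ⌊|1/(λx)| + 1 - α⌋` of the α-Rosen continued fraction. -/
noncomputable def rosenD (lam α x : ℝ) : ℤ := ⌊|1 / (lam * x)| + 1 - α⌋

/-- The α-Rosen continued fraction map `T_α` on `[(α-1)λ, αλ)`. -/
noncomputable def rosenT (lam α x : ℝ) : ℝ :=
  if x = 0 then 0 else Real.sign x / x - lam * (rosenD lam α x : ℝ)

/-- `x` is `G_q`-irrational: the orbit of `x` under `T_α` never hits `0`. -/
def GIrrational (lam α x : ℝ) : Prop := ∀ n : ℕ, (rosenT lam α)^[n] x ≠ 0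

/-- The recursion `u_n = d_n(x)·λ·u_{n-1} + ε_n(x)·u_{n-2}` for the numerators and
denominators of the α-Rosen convergents, with the index shifted by one:
`rosenPQ lam α x a b n = u_{n-1}` where `u_{-1} = a`, `u_0 = b`. -/
noncomputable def rosenPQ (lam α x a b : ℝ) : ℕ → ℝ
  | 0 => a
  | 1 => b
  | n + 2 =>
      (rosenD lam α ((rosenT lam α)^[n] x) : ℝ) * lam * rosenPQ lam α x a b (n + 1)
        + Real.sign ((rosenT lam α)^[n] x) * rosenPQ lam α x a b n

/-- The approximation coefficient `Θ_n(x) = q_n² · |x - p_n/q_n|` of the α-Rosen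
expansion of `x` (with `p_{-1}=1, q_{-1}=0, p_0=0, q_0=1`). -/
noncomputable def rosenTheta (lam α x : ℝ) (n : ℕ) : ℝ :=
  (rosenPQ lam α x 0 1 (n + 1)) ^ 2 *
    |x - rosenPQ lam α x 1 0 (n + 1) / rosenPQ lam α x 0 1 (n + 1)|

/-- The natural extension map `𝒯_α(t,v) = (T_α(t), 1/(d(t)λ + ε(t)v))`. -/
noncomputable def rosenNE (lam α : ℝ) (tv : ℝ × ℝ) : ℝ × ℝ :=
  (rosenT lam α tv.1, 1 / ((rosenD lam α tv.1 : ℝ) * lam + Real.sign tv.1 * tv.2))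

namespace Tong4

variable {l α y : ℝ}

lemma rosenT_neg (h : y < 0) : rosenT l α y = -1/y - l * (rosenD l α y : ℝ) := by
  rw [rosenT, if_neg (ne_of_lt h), Real.sign_of_neg h]

lemma rosenT_pos (h : 0 < y) : rosenT l α y = 1/y - l * (rosenD l α y : ℝ) := by
  rw [rosenT, if_neg (ne_of_gt h), Real.sign_of_pos h]

lemma dneg_bounds (hl0 : 0 < l) (h : y < 0) :
    ((rosenD l α y : ℝ)) ≤ 1/(l * -y) + 1 - α ∧ 1/(l * -y) + 1 - α < (rosenD l α y : ℝ) + 1 := by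
  have e : |1 / (l * y)| = 1/(l * -y) := by
    rw [abs_div, abs_one, abs_mul, abs_of_pos hl0, abs_of_neg h]
  rw [rosenD, e]
  exact ⟨Int.floor_le _, Int.lt_floor_add_one _⟩

lemma dpos_bounds (hl0 : 0 < l) (h : 0 < y) :
    ((rosenD l α y : ℝ)) ≤ 1/(l * y) + 1 - α ∧ 1/(l * y) + 1 - α < (rosenD l α y : ℝ) + 1 := by
  have e : |1 / (l * y)| = 1/(l * y) := by
    rw [abs_div, abs_one, abs_mul, abs_of_pos hl0, abs_of_pos h]
  rw [rosenD, e]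
  exact ⟨Int.floor_le _, Int.lt_floor_add_one _⟩

lemma mem_step (hl2 : l^2 = 2) (hl1 : 1.41 < l) (hl4 : l < 1.415)
    (ha1 : 1/2 < α) (ha2 : α * l < 1)
    (h1 : (α-1)*l ≤ y) (h2 : y < α*l) (hy : y ≠ 0) :
    (α-1)*l ≤ rosenT l α y ∧ rosenT l α y < α*l := by
  have hl0 : 0 < l := by linarith
  rcases lt_or_gt_of_ne hy with h|h
  · obtain ⟨hd1, hd2⟩ := dneg_bounds (α := α) hl0 h
    rw [rosenT_neg h]
    have hy0 : 0 < -y := by linarith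
    have e : l * (1/(l * -y)) = -1/y := by field_simp
    constructor
    · nlinarith [mul_le_mul_of_nonneg_left hd1 hl0.le]
    · nlinarith [mul_lt_mul_of_pos_left hd2 hl0]
  · obtain ⟨hd1, hd2⟩ := dpos_bounds (α := α) hl0 h
    rw [rosenT_pos h]
    have e : l * (1/(l * y)) = 1/y := by field_simp
    constructor
    · nlinarith [mul_le_mul_of_nonneg_left hd1 hl0.le]
    · nlinarith [mul_lt_mul_of_pos_left hd2 hl0]

lemma d_ge_one (hl2 : l^2 = 2) (hl1 : 1.41 < l) (hl4 : l < 1.415)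
    (ha1 : 1/2 < α) (ha2 : α * l < 1)
    (h1 : (α-1)*l ≤ y) (h2 : y < α*l) (hy : y ≠ 0) : 1 ≤ rosenD l α y := by
  have hl0 : 0 < l := by linarith
  rw [rosenD]
  apply Int.le_floor.mpr
  push_cast
  have e : |1/(l*y)| = 1/(l*|y|) := by rw [abs_div, abs_one, abs_mul, abs_of_pos hl0]
  rw [e]
  have hy0 : 0 < |y| := abs_pos.mpr hy
  have hy1 : |y| < 1 := by
    rcases abs_cases y with ⟨e1,_⟩|⟨e1,_⟩ <;> nlinarith
  have h0 : 0 < l * |y| := mul_pos hl0 hy0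
  have hk : α * (l * |y|) < 1 := by nlinarith
  have : α < 1/(l*|y|) := by rw [lt_div_iff₀ h0]; linarith
  linarith

lemma T_pos_of_d_one (hl2 : l^2 = 2) (hl1 : 1.41 < l) (hl4 : l < 1.415)
    (ha1 : 1/2 < α) (ha2 : α * l < 1)
    (h : y < 0) (h1 : (α-1)*l ≤ y) (hd : rosenD l α y = 1) : 0 < rosenT l α y := by
  rw [rosenT_neg h, hd]
  push_cast
  have hy0 : 0 < -y := by linarith
  have hyb : -y ≤ (1-α)*l := by nlinarith
  have hpos : 0 < (1-α)*l := by nlinarith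
  have k1 : 1/((1-α)*l) ≤ 1/(-y) := one_div_le_one_div_of_le hy0 hyb
  have k2 : l < 1/((1-α)*l) := by rw [lt_div_iff₀ hpos]; nlinarith
  have e : 1/(-y) = -1/y := by rw [div_neg, neg_div]
  linarith

lemma d_two_lb (hl2 : l^2 = 2) (hl1 : 1.41 < l) (hl4 : l < 1.415)
    (ha1 : 1/2 < α) (ha2 : α * l < 1)
    (h : y < 0) (hd : 2 ≤ rosenD l α y) : -(1/((α+1)*l)) ≤ y := by
  have hl0 : 0 < l := by linarith
  obtain ⟨hd1, _⟩ := dneg_bounds (α := α) hl0 h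
  have h2 : (2:ℝ) ≤ (rosenD l α y : ℝ) := by exact_mod_cast hd
  have hk : 1 + α ≤ 1/(l * -y) := by linarith
  have hy0 : 0 < l * -y := by nlinarith
  have hc1 : (1+α) * (l * -y) ≤ 1 := by
    have := mul_le_mul_of_nonneg_right hk (le_of_lt hy0)
    rwa [div_mul_cancel₀] at this
    exact ne_of_gt hy0
  have hq : 0 < (α+1)*l := by nlinarith
  have : -y ≤ 1/((α+1)*l) := by rw [le_div_iff₀ hq]; nlinarith
  linarith

lemma T_gt_B_of_d_one_pos (hl2 : l^2 = 2) (hl1 : 1.41 < l) (hl4 : l < 1.415)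
    (ha1 : 1/2 < α) (ha2 : α * l < 1)
    (h : 0 < y) (h2 : y < α*l) (hd : rosenD l α y = 1) :
    (1-2*α)/(α*l) < rosenT l α y := by
  rw [rosenT_pos h, hd]
  push_cast
  have hal : 0 < α * l := by nlinarith
  have k1 : 1/(α*l) < 1/y := one_div_lt_one_div_of_lt h h2
  have e : (1-2*α)/(α*l) = 1/(α*l) - l := by
    field_simp
    linear_combination α * hl2
  linarith

lemma orbit_mem {x : ℝ} (hl2 : l^2 = 2) (hl1 : 1.41 < l) (hl4 : l < 1.415)
    (ha1 : 1/2 < α) (ha2 : α * l < 1)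
    (hx1 : (α-1)*l ≤ x) (hx2 : x < α*l) (hG : GIrrational l α x) (m : ℕ) :
    (α-1)*l ≤ (rosenT l α)^[m] x ∧ (rosenT l α)^[m] x < α*l := by
  induction m with
  | zero => exact ⟨hx1, hx2⟩
  | succ m ih =>
      rw [Function.iterate_succ_apply']
      exact mem_step hl2 hl1 hl4 ha1 ha2 ih.1 ih.2 (hG m)


lemma rosenT_negX (l α y : ℝ) (h : y < 0) :
    rosenT l α y = -1/y - l * (rosenD l α y : ℝ) := rosenT_neg h

lemma orbit_memX (l α x : ℝ) (hl2 : l^2 = 2) (hl1 : 1.41 < l) (hl4 : l < 1.415)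
    (ha1 : 1/2 < α) (ha2 : α * l < 1)
    (hx1 : (α-1)*l ≤ x) (hx2 : x < α*l) (hG : GIrrational l α x) (m : ℕ) :
    (α-1)*l ≤ (rosenT l α)^[m] x ∧ (rosenT l α)^[m] x < α*l :=
  orbit_mem hl2 hl1 hl4 ha1 ha2 hx1 hx2 hG m

lemma d_ge_oneX (l α y : ℝ) (hl2 : l^2 = 2) (hl1 : 1.41 < l) (hl4 : l < 1.415)
    (ha1 : 1/2 < α) (ha2 : α * l < 1)
    (h1 : (α-1)*l ≤ y) (h2 : y < α*l) (hy : y ≠ 0) : 1 ≤ rosenD l α y :=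
  d_ge_one hl2 hl1 hl4 ha1 ha2 h1 h2 hy

lemma T_pos_of_d_oneX (l α y : ℝ) (hl2 : l^2 = 2) (hl1 : 1.41 < l) (hl4 : l < 1.415)
    (ha1 : 1/2 < α) (ha2 : α * l < 1)
    (h : y < 0) (h1 : (α-1)*l ≤ y) (hd : rosenD l α y = 1) : 0 < rosenT l α y :=
  T_pos_of_d_one hl2 hl1 hl4 ha1 ha2 h h1 hd

lemma d_two_lbX (l α y : ℝ) (hl2 : l^2 = 2) (hl1 : 1.41 < l) (hl4 : l < 1.415)
    (ha1 : 1/2 < α) (ha2 : α * l < 1)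
    (h : y < 0) (hd : 2 ≤ rosenD l α y) : -(1/((α+1)*l)) ≤ y :=
  d_two_lb hl2 hl1 hl4 ha1 ha2 h hd

lemma T_gt_B_of_d_one_posX (l α y : ℝ) (hl2 : l^2 = 2) (hl1 : 1.41 < l) (hl4 : l < 1.415)
    (ha1 : 1/2 < α) (ha2 : α * l < 1)
    (h : 0 < y) (h2 : y < α*l) (hd : rosenD l α y = 1) :
    (1-2*α)/(α*l) < rosenT l α y :=
  T_gt_B_of_d_one_pos hl2 hl1 hl4 ha1 ha2 h h2 hd

lemma arith1 {l d Qm Qm1 : ℝ} (hl0 : 0 < l) (hd1 : 1 ≤ d)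
    (hv : 2*Qm ≤ l*Qm1) (i2 : 0 < Qm1) : 0 < d * l * Qm1 + -1 * Qm := by
  nlinarith [mul_le_mul_of_nonneg_right hd1 (mul_pos hl0 i2).le, mul_pos hl0 i2]

lemma arith2 {l d Qm Qm1 : ℝ} (hl0 : 0 < l) (hd1 : 1 ≤ d)
    (i1 : 0 ≤ Qm) (i2 : 0 < Qm1) : 0 < d * l * Qm1 + 1 * Qm := by
  nlinarith [mul_le_mul_of_nonneg_right hd1 (mul_pos hl0 i2).le, mul_pos hl0 i2]

lemma arith3 {l d Qm Qm1 : ℝ} (hl2 : l^2 = 2) (hl0 : 0 < l) (hd2 : 2 ≤ d)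
    (hv : 2*Qm ≤ l*Qm1) (i1 : 0 ≤ Qm) (i2 : 0 < Qm1) :
    2 * Qm1 ≤ l * (d * l * Qm1 + -1 * Qm) := by
  have e3 : l*(l*Qm1) = 2*Qm1 := by linear_combination Qm1 * hl2
  have h1 : 0 ≤ (d - 2) * (l*(l*Qm1)) := by
    apply mul_nonneg (by linarith)
    nlinarith [mul_pos hl0 i2]
  nlinarith [mul_le_mul_of_nonneg_left hv hl0.le]

lemma arith4 {l d Qm Qm1 : ℝ} (hl2 : l^2 = 2) (hl0 : 0 < l) (hd1 : 1 ≤ d)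
    (i1 : 0 ≤ Qm) (i2 : 0 < Qm1) :
    2 * Qm1 ≤ l * (d * l * Qm1 + 1 * Qm) := by
  have e3 : l*(l*Qm1) = 2*Qm1 := by linear_combination Qm1 * hl2
  have h1 : 0 ≤ (d - 1) * (l*(l*Qm1)) := by
    apply mul_nonneg (by linarith)
    nlinarith [mul_pos hl0 i2]
  nlinarith [mul_nonneg hl0.le i1]

lemma arith5 {l Qm Qm1 : ℝ} (hl2 : l^2 = 2) (hl1 : 1.41 < l) (hl4 : l < 1.415)
    (h4 : Qm < (l-1)*Qm1) (i2 : 0 < Qm1) :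
    Qm1 < (l-1) * (2 * l * Qm1 + -1 * Qm) := by
  have e4 : (l-1)*((l+1)*Qm1) = Qm1 := by linear_combination Qm1 * hl2
  have h5 : (l+1)*Qm1 < 2*l*Qm1 + -1*Qm := by nlinarith
  nlinarith [mul_lt_mul_of_pos_left h5 (show (0:ℝ) < l-1 by linarith)]

lemma arith6 {l d Qm Qm1 : ℝ} (hl2 : l^2 = 2) (hl1 : 1.41 < l) (hl4 : l < 1.415)
    (hd3 : 3 ≤ d) (hv : 2*Qm ≤ l*Qm1) (i1 : 0 ≤ Qm) (i2 : 0 < Qm1) :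
    Qm1 < (l-1) * (d * l * Qm1 + -1 * Qm) := by
  have hl0 : 0 < l := by linarith
  have t1 : 3*(l*Qm1) ≤ d*(l*Qm1) :=
    mul_le_mul_of_nonneg_right hd3 (mul_pos hl0 i2).le
  have t3 : (l-1)*((5*l/2)*Qm1) = (5*(2-l)/2)*Qm1 := by
    linear_combination (5*Qm1/2) * hl2
  nlinarith [mul_le_mul_of_nonneg_left
    (show (5*l/2)*Qm1 ≤ d*l*Qm1 + -1*Qm by nlinarith)
    (show (0:ℝ) ≤ l-1 by linarith)]

lemma arith7 {l d Qm Qm1 : ℝ} (hl2 : l^2 = 2) (hl1 : 1.41 < l) (hl4 : l < 1.415)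
    (hd2 : 2 ≤ d) (i1 : 0 ≤ Qm) (i2 : 0 < Qm1) :
    Qm1 < (l-1) * (d * l * Qm1 + 1 * Qm) := by
  have hl0 : 0 < l := by linarith
  have t1 : 2*(l*Qm1) ≤ d*(l*Qm1) :=
    mul_le_mul_of_nonneg_right hd2 (mul_pos hl0 i2).le
  have t3 : (l-1)*(2*l*Qm1) = (4-2*l)*Qm1 := by
    linear_combination 2*Qm1 * hl2
  nlinarith [mul_le_mul_of_nonneg_left
    (show 2*l*Qm1 ≤ d*l*Qm1 + 1*Qm by nlinarith)
    (show (0:ℝ) ≤ l-1 by linarith)]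

lemma arith8 {l α T : ℝ} (hl2 : l^2 = 2) (hl1 : 1.41 < l) (hl4 : l < 1.415)
    (ha1 : 1/2 < α) (ha2 : α * l < 1) (hh : T < 0) (h4 : (1-2*α)/(α*l) < T) :
    (1-2*α)/(α*l) < -1/T - 2*l := by
  have hal : 0 < α*l := by nlinarith
  have hBneg : (1-2*α)/(α*l) < 0 := div_neg_of_neg_of_pos (by linarith) hal
  set B := (1-2*α)/(α*l) with hB
  have hB1l : 1 - l < B := by
    have e6 : B - (1-l) = (1-α*l)/(α*l) := by
      rw [hB]; field_simp; linear_combination α * hl2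
    have : 0 < (1-α*l)/(α*l) := div_pos (by linarith) hal
    linarith
  have h6 : (B+2*l)*(-T) < (B+2*l)*(-B) :=
    mul_lt_mul_of_pos_left (by linarith) (by linarith)
  have h7 : (B+2*l)*(-B) ≤ 1 := by
    nlinarith [mul_nonneg (show (0:ℝ) ≤ B+l-1 by linarith)
      (show (0:ℝ) ≤ B+l+1 by linarith)]
  have h9 : B + 2*l < -1/T := (lt_div_iff_of_neg hh).mpr (by linarith)
  linarith
lemma master {x : ℝ} (hl2 : l^2 = 2) (hl1 : 1.41 < l) (hl4 : l < 1.415)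
    (ha1 : 1/2 < α) (ha2 : α * l < 1)
    (hx1 : (α-1)*l ≤ x) (hx2 : x < α*l) (hG : GIrrational l α x) : ∀ m : ℕ,
    0 ≤ rosenPQ l α x 0 1 m ∧ 0 < rosenPQ l α x 0 1 (m+1) ∧
    ((rosenT l α)^[m] x < 0 → 2 * rosenPQ l α x 0 1 m ≤ l * rosenPQ l α x 0 1 (m+1)) ∧
    (rosenPQ l α x 0 1 m < (l-1) * rosenPQ l α x 0 1 (m+1) ∨
      (1-2*α)/(α*l) < (rosenT l α)^[m] x) ∧
    x * (rosenPQ l α x 0 1 m * (rosenT l α)^[m] x + rosenPQ l α x 0 1 (m+1))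
        = rosenPQ l α x 1 0 m * (rosenT l α)^[m] x + rosenPQ l α x 1 0 (m+1) ∧
    (rosenPQ l α x 1 0 m * rosenPQ l α x 0 1 (m+1)
        - rosenPQ l α x 1 0 (m+1) * rosenPQ l α x 0 1 m)^2 = 1 := by
  have hl0 : 0 < l := by linarith
  intro m
  induction m with
  | zero =>
      have e0 : rosenPQ l α x 0 1 0 = 0 := rfl
      have e1 : rosenPQ l α x 0 1 (0+1) = 1 := rfl
      have e2 : rosenPQ l α x 1 0 0 = 1 := rfl
      have e3 : rosenPQ l α x 1 0 (0+1) = 0 := rfl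
      have e4 : (rosenT l α)^[0] x = x := rfl
      rw [e0, e1, e2, e3, e4]
      exact ⟨le_refl 0, one_pos, fun _ => by nlinarith, Or.inl (by nlinarith),
        by ring, by norm_num⟩
  | succ m ih =>
      have hidx : m + 1 + 1 = m + 2 := rfl
      rw [hidx]
      obtain ⟨i1, i2, i3, i4, i5, i6⟩ := ih
      have hTne : (rosenT l α)^[m] x ≠ 0 := hG m
      obtain ⟨hr1, hr2⟩ := orbit_memX l α x hl2 hl1 hl4 ha1 ha2 hx1 hx2 hG m
      have hd1 : 1 ≤ rosenD l α ((rosenT l α)^[m] x) :=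
        d_ge_oneX l α _ hl2 hl1 hl4 ha1 ha2 hr1 hr2 hTne
      have hQ2 : rosenPQ l α x 0 1 (m+2)
          = (rosenD l α ((rosenT l α)^[m] x) : ℝ) * l * rosenPQ l α x 0 1 (m+1)
            + Real.sign ((rosenT l α)^[m] x) * rosenPQ l α x 0 1 m := rfl
      have hP2 : rosenPQ l α x 1 0 (m+2)
          = (rosenD l α ((rosenT l α)^[m] x) : ℝ) * l * rosenPQ l α x 1 0 (m+1)
            + Real.sign ((rosenT l α)^[m] x) * rosenPQ l α x 1 0 m := rfl
      have hiter : (rosenT l α)^[m+1] x = rosenT l α ((rosenT l α)^[m] x) :=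
        Function.iterate_succ_apply' _ _ _
      set T := (rosenT l α)^[m] x with hT
      set T' := (rosenT l α)^[m+1] x with hT'
      set d : ℤ := rosenD l α T with hdd
      set ε : ℝ := Real.sign T with hε
      set Qm := rosenPQ l α x 0 1 m with hQm
      set Qm1 := rosenPQ l α x 0 1 (m+1) with hQm1
      set Q2 := rosenPQ l α x 0 1 (m+2) with hQQ2
      set Pm := rosenPQ l α x 1 0 m with hPm
      set Pm1 := rosenPQ l α x 1 0 (m+1) with hPm1
      set P2 := rosenPQ l α x 1 0 (m+2) with hPP2
      clear_value T T' d ε Qm Qm1 Q2 Pm Pm1 P2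
      have hd1R : (1:ℝ) ≤ (d:ℝ) := by exact_mod_cast hd1
      have hTrel : T' = ε / T - l * (d:ℝ) := by
        rw [hiter, rosenT, if_neg hTne, ← hε, ← hdd]
      have key : T * (l * (d:ℝ) + T') = ε := by
        rw [hTrel]
        have e7 : T * (ε / T) = ε := by field_simp
        linear_combination e7
      have hε2 : ε^2 = 1 := by
        rcases lt_or_gt_of_ne hTne with hh | hh
        · rw [hε, Real.sign_of_neg hh]; norm_num
        · rw [hε, Real.sign_of_pos hh]; norm_num
      have hQ2pos : 0 < Q2 := by
        rw [hQ2]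
        rcases lt_or_gt_of_ne hTne with hh | hh
        · rw [hε, Real.sign_of_neg hh] at *
          exact arith1 hl0 hd1R (i3 hh) i2
        · rw [hε, Real.sign_of_pos hh] at *
          exact arith2 hl0 hd1R i1 i2
      refine ⟨i2.le, hQ2pos, ?_, ?_, ?_, ?_⟩
      · -- I3 at m+1
        intro hT'neg
        rw [hQ2]
        rcases lt_or_gt_of_ne hTne with hh | hh
        · rw [hε, Real.sign_of_neg hh]
          rcases hd1.lt_or_eq with hd2 | hd2
          · exact arith3 hl2 hl0 (by exact_mod_cast hd2) (i3 hh) i1 i2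
          · exfalso
            have hpos : 0 < rosenT l α T :=
              T_pos_of_d_oneX l α T hl2 hl1 hl4 ha1 ha2 hh hr1 (by rw [← hdd]; exact hd2.symm)
            rw [← hiter] at hpos; linarith
        · rw [hε, Real.sign_of_pos hh]
          exact arith4 hl2 hl0 hd1R i1 i2
      · -- I4 at m+1
        rcases lt_or_gt_of_ne hTne with hh | hh
        · have hcase : d = 1 ∨ d = 2 ∨ 3 ≤ d := by omega
          rcases hcase with hd2 | hd2 | hd2
          · right
            have hpos : 0 < rosenT l α T :=
              T_pos_of_d_oneX l α T hl2 hl1 hl4 ha1 ha2 hh hr1 (by rw [← hdd]; exact hd2)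
            rw [← hiter] at hpos
            have hal : 0 < α*l := by nlinarith
            have : (1-2*α)/(α*l) < 0 := div_neg_of_neg_of_pos (by linarith) hal
            linarith
          · -- d = 2
            have hd2R : (d:ℝ) = 2 := by exact_mod_cast hd2
            rcases i4 with h4 | h4
            · left
              rw [hQ2, hε, Real.sign_of_neg hh, hd2R]
              exact arith5 hl2 hl1 hl4 h4 i2
            · right
              have hT'e : T' = -1/T - 2*l := by
                rw [hTrel, hε, Real.sign_of_neg hh, hd2R]; rw [neg_div]; ring
              rw [hT'e]
              exact arith8 hl2 hl1 hl4 ha1 ha2 hh h4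
          · -- d ≥ 3
            left
            rw [hQ2, hε, Real.sign_of_neg hh]
            exact arith6 hl2 hl1 hl4 (by exact_mod_cast hd2) (i3 hh) i1 i2
        · -- T > 0
          rcases hd1.lt_or_eq with hd2 | hd2
          · left
            rw [hQ2, hε, Real.sign_of_pos hh]
            exact arith7 hl2 hl1 hl4 (by exact_mod_cast hd2) i1 i2
          · right
            have hBlt := T_gt_B_of_d_one_posX l α T hl2 hl1 hl4 ha1 ha2 hh hr2 (by rw [← hdd]; exact hd2.symm)
            rw [← hiter] at hBlt
            exact hBlt
      · rw [hQ2, hP2]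
        linear_combination (l*(d:ℝ) + T') * i5 - (x*Qm - Pm) * key
      · rw [hQ2, hP2]
        linear_combination (Pm*Qm1 - Pm1*Qm)^2 * hε2 + i6


lemma masterX (l α x : ℝ) (hl2 : l^2 = 2) (hl1 : 1.41 < l) (hl4 : l < 1.415)
    (ha1 : 1/2 < α) (ha2 : α * l < 1)
    (hx1 : (α-1)*l ≤ x) (hx2 : x < α*l) (hG : GIrrational l α x) : ∀ m : ℕ,
    0 ≤ rosenPQ l α x 0 1 m ∧ 0 < rosenPQ l α x 0 1 (m+1) ∧
    ((rosenT l α)^[m] x < 0 → 2 * rosenPQ l α x 0 1 m ≤ l * rosenPQ l α x 0 1 (m+1)) ∧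
    (rosenPQ l α x 0 1 m < (l-1) * rosenPQ l α x 0 1 (m+1) ∨
      (1-2*α)/(α*l) < (rosenT l α)^[m] x) ∧
    x * (rosenPQ l α x 0 1 m * (rosenT l α)^[m] x + rosenPQ l α x 0 1 (m+1))
        = rosenPQ l α x 1 0 m * (rosenT l α)^[m] x + rosenPQ l α x 1 0 (m+1) ∧
    (rosenPQ l α x 1 0 m * rosenPQ l α x 0 1 (m+1)
        - rosenPQ l α x 1 0 (m+1) * rosenPQ l α x 0 1 m)^2 = 1 :=
  master hl2 hl1 hl4 ha1 ha2 hx1 hx2 hG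

section withx
variable {x : ℝ} (hl2 : l^2 = 2) (hl1 : 1.41 < l) (hl4 : l < 1.415)
    (ha1 : 1/2 < α) (ha2 : α * l < 1)
    (hx1 : (α-1)*l ≤ x) (hx2 : x < α*l) (hG : GIrrational l α x)

include hl2 hl1 hl4 ha1 ha2 hx1 hx2 hG

lemma D_pos (m : ℕ) :
    0 < rosenPQ l α x 0 1 m * (rosenT l α)^[m] x + rosenPQ l α x 0 1 (m+1) := by
  have hl0 : 0 < l := by linarith
  obtain ⟨i1, i2, i3, -, -, -⟩ := masterX l α x hl2 hl1 hl4 ha1 ha2 hx1 hx2 hG m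
  obtain ⟨hr1, hr2⟩ := orbit_memX l α x hl2 hl1 hl4 ha1 ha2 hx1 hx2 hG m
  set T := (rosenT l α)^[m] x
  set Qm := rosenPQ l α x 0 1 m
  set Qm1 := rosenPQ l α x 0 1 (m+1)
  clear_value T Qm Qm1
  rcases le_or_gt 0 T with h | h
  · nlinarith [mul_nonneg i1 h]
  · have hv := i3 h
    have e : (1-α)*l/2*(l*Qm1) = (1-α)*Qm1 := by
      linear_combination ((1-α)*Qm1/2) * hl2
    nlinarith [mul_le_mul_of_nonneg_left hr1 i1,
      mul_le_mul_of_nonneg_left hv (show (0:ℝ) ≤ (1-α)*l/2 by nlinarith)]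

lemma abs_det (m : ℕ) :
    |rosenPQ l α x 1 0 m * rosenPQ l α x 0 1 (m+1)
      - rosenPQ l α x 1 0 (m+1) * rosenPQ l α x 0 1 m| = 1 := by
  obtain ⟨-, -, -, -, -, i6⟩ := masterX l α x hl2 hl1 hl4 ha1 ha2 hx1 hx2 hG m
  set Δ := rosenPQ l α x 1 0 m * rosenPQ l α x 0 1 (m+1)
      - rosenPQ l α x 1 0 (m+1) * rosenPQ l α x 0 1 m
  have h8 : (Δ - 1)*(Δ + 1) = 0 := by linear_combination i6
  rcases mul_eq_zero.mp h8 with h | h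
  · have : Δ = 1 := by linarith
    rw [this]; norm_num
  · have : Δ = -1 := by linarith
    rw [this]; norm_num

lemma thetaA (m : ℕ) :
    rosenTheta l α x m * (rosenPQ l α x 0 1 m * (rosenT l α)^[m] x + rosenPQ l α x 0 1 (m+1))
      = rosenPQ l α x 0 1 (m+1) * |(rosenT l α)^[m] x| := by
  obtain ⟨-, i2, -, -, i5, -⟩ := masterX l α x hl2 hl1 hl4 ha1 ha2 hx1 hx2 hG m
  have habs := abs_det hl2 hl1 hl4 ha1 ha2 hx1 hx2 hG m
  have hD := D_pos hl2 hl1 hl4 ha1 ha2 hx1 hx2 hG m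
  rw [rosenTheta]
  set T := (rosenT l α)^[m] x
  set Qm := rosenPQ l α x 0 1 m
  set Qm1 := rosenPQ l α x 0 1 (m+1)
  set Pm := rosenPQ l α x 1 0 m
  set Pm1 := rosenPQ l α x 1 0 (m+1)
  clear_value T Qm Qm1 Pm Pm1
  have e1 : x - Pm1/Qm1 = (x*Qm1 - Pm1)/Qm1 := by field_simp
  rw [e1, abs_div, abs_of_pos i2]
  have e2 : (x*Qm1 - Pm1) * (Qm*T + Qm1) = T * (Pm*Qm1 - Pm1*Qm) := by
    linear_combination Qm1 * i5
  have e3 : |x*Qm1 - Pm1| * (Qm*T + Qm1) = |T| := by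
    have h9 := congrArg abs e2
    rw [abs_mul, abs_mul, abs_of_pos hD, habs, mul_one] at h9
    exact h9
  have e4 : Qm1^2 * (|x*Qm1 - Pm1|/Qm1) = Qm1 * |x*Qm1 - Pm1| := by
    field_simp
  rw [e4, mul_assoc, e3]

lemma thetaB (m : ℕ) :
    rosenTheta l α x m
      * (rosenPQ l α x 0 1 (m+1) * (rosenT l α)^[m+1] x + rosenPQ l α x 0 1 (m+2))
      = rosenPQ l α x 0 1 (m+1) := by
  obtain ⟨-, i2, -, -, -, -⟩ := masterX l α x hl2 hl1 hl4 ha1 ha2 hx1 hx2 hG m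
  obtain ⟨-, -, -, -, i5, -⟩ := masterX l α x hl2 hl1 hl4 ha1 ha2 hx1 hx2 hG (m+1)
  have habs := abs_det hl2 hl1 hl4 ha1 ha2 hx1 hx2 hG (m+1)
  have hD := D_pos hl2 hl1 hl4 ha1 ha2 hx1 hx2 hG (m+1)
  have hidx : m + 1 + 1 = m + 2 := rfl
  rw [hidx] at i5 habs hD
  rw [rosenTheta]
  set T' := (rosenT l α)^[m+1] x
  set Qm1 := rosenPQ l α x 0 1 (m+1)
  set Q2 := rosenPQ l α x 0 1 (m+2)
  set Pm1 := rosenPQ l α x 1 0 (m+1)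
  set P2 := rosenPQ l α x 1 0 (m+2)
  clear_value T' Qm1 Q2 Pm1 P2
  have e1 : x - Pm1/Qm1 = (x*Qm1 - Pm1)/Qm1 := by field_simp
  rw [e1, abs_div, abs_of_pos i2]
  have e2 : (x*Qm1 - Pm1) * (Qm1*T' + Q2) = -(Pm1*Q2 - P2*Qm1) := by
    linear_combination Qm1 * i5
  have e3 : |x*Qm1 - Pm1| * (Qm1*T' + Q2) = 1 := by
    have h9 := congrArg abs e2
    rw [abs_mul, abs_of_pos hD, abs_neg, habs] at h9
    exact h9
  have e4 : Qm1^2 * (|x*Qm1 - Pm1|/Qm1) = Qm1 * |x*Qm1 - Pm1| := by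
    field_simp
  rw [e4, mul_assoc, e3, mul_one]



omit hl2 hl1 hl4 ha1 ha2 hx1 hx2 hG in
lemma arith10 {cc u dR Qm Qm1 : ℝ} (hl1 : 1.41 < l) (hl4 : l < 1.415)
    (ha1 : 1/2 < α) (hcc : 1/2 < cc) (hd3 : 3 ≤ dR)
    (hv : 2*Qm ≤ l*Qm1) (i2 : 0 < Qm1) (hu : (α-1)*l ≤ u)
    (k1 : cc*(Qm1*u + (dR*l*Qm1 + -1*Qm)) ≤ Qm1) : False := by
  have hl0 : 0 < l := by linarith
  have h3 : (2.82:ℝ) ≤ (α+3/2)*l := by nlinarith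
  have h4 : 2.82*Qm1 ≤ ((α+3/2)*l)*Qm1 := mul_le_mul_of_nonneg_right h3 i2.le
  have h5 : Qm1*((α-1)*l) ≤ Qm1*u := mul_le_mul_of_nonneg_left hu i2.le
  have h6 : 3*(l*Qm1) ≤ dR*(l*Qm1) := mul_le_mul_of_nonneg_right hd3 (mul_nonneg hl0.le i2.le)
  have hDlb : 2.8*Qm1 ≤ Qm1*u + (dR*l*Qm1 + -1*Qm) := by nlinarith [h4, h5, h6, hv]
  have j2 : cc*(2.8*Qm1) ≤ cc*(Qm1*u + (dR*l*Qm1 + -1*Qm)) :=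
    mul_le_mul_of_nonneg_left hDlb (by linarith)
  nlinarith [j2, k1, mul_pos (show (0:ℝ) < cc - 1/2 by linarith) i2]

lemma pair_neg {cc : ℝ} (hcc : 1/2 < cc) (m : ℕ)
    (h1 : cc ≤ rosenTheta l α x m) (h2 : cc ≤ rosenTheta l α x (m+1)) :
    (rosenT l α)^[m+1] x < 0 := by
  have hidx : m + 1 + 1 = m + 2 := rfl
  obtain ⟨-, i2, -, -, -, -⟩ := masterX l α x hl2 hl1 hl4 ha1 ha2 hx1 hx2 hG m
  obtain ⟨-, i2', -, -, -, -⟩ := masterX l α x hl2 hl1 hl4 ha1 ha2 hx1 hx2 hG (m+1)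
  rw [hidx] at i2'
  have hD := D_pos hl2 hl1 hl4 ha1 ha2 hx1 hx2 hG (m+1)
  rw [hidx] at hD
  have hA := thetaA hl2 hl1 hl4 ha1 ha2 hx1 hx2 hG (m+1)
  rw [hidx] at hA
  have hB := thetaB hl2 hl1 hl4 ha1 ha2 hx1 hx2 hG m
  have hne : (rosenT l α)^[m+1] x ≠ 0 := hG (m+1)
  by_contra hpos
  push_neg at hpos
  have ht : 0 < (rosenT l α)^[m+1] x := lt_of_le_of_ne hpos (Ne.symm hne)
  set T' := (rosenT l α)^[m+1] x
  set Qm1 := rosenPQ l α x 0 1 (m+1)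
  set Q2 := rosenPQ l α x 0 1 (m+2)
  have habs : |T'| = T' := abs_of_pos ht
  rw [habs] at hA
  have k1 : cc*(Qm1*T' + Q2) ≤ Qm1 := by
    calc cc*(Qm1*T' + Q2) ≤ rosenTheta l α x m * (Qm1*T' + Q2) :=
          mul_le_mul_of_nonneg_right h1 hD.le
    _ = Qm1 := hB
  have k2 : cc*(Qm1*T' + Q2) ≤ Q2*T' := by
    calc cc*(Qm1*T' + Q2) ≤ rosenTheta l α x (m+1) * (Qm1*T' + Q2) :=
          mul_le_mul_of_nonneg_right h2 hD.le
    _ = Q2*T' := hA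
  clear_value T' Qm1 Q2
  -- contradiction
  have k3 : (cc*(Qm1*T' + Q2))*(cc*(Qm1*T' + Q2)) ≤ Qm1*(Q2*T') :=
    mul_le_mul k1 k2 (mul_nonneg (by linarith) hD.le) i2.le
  nlinarith [k3, sq_nonneg (cc*(Qm1*T' - Q2)), mul_pos (mul_pos i2 i2') ht,
    mul_pos (show (0:ℝ) < 2*cc-1 by linarith) (show (0:ℝ) < 2*cc+1 by linarith)]

lemma digit_two {cc : ℝ} (hcc : 1/2 < cc) (m : ℕ)
    (h1 : cc ≤ rosenTheta l α x m)
    (hm : (rosenT l α)^[m] x < 0) (hm1 : (rosenT l α)^[m+1] x < 0) :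
    rosenD l α ((rosenT l α)^[m] x) = 2 ∧ (rosenT l α)^[m] x < -1/(2*l) ∧
      -(1/((α+1)*l)) ≤ (rosenT l α)^[m] x ∧
      (rosenT l α)^[m+1] x = -1/((rosenT l α)^[m] x) - 2*l := by
  have hl0 : 0 < l := by linarith
  have hidx : m + 1 + 1 = m + 2 := rfl
  have hTne : (rosenT l α)^[m] x ≠ 0 := hG m
  obtain ⟨hr1, hr2⟩ := orbit_memX l α x hl2 hl1 hl4 ha1 ha2 hx1 hx2 hG m
  obtain ⟨hr1', hr2'⟩ := orbit_memX l α x hl2 hl1 hl4 ha1 ha2 hx1 hx2 hG (m+1)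
  obtain ⟨i1, i2, i3, -, -, -⟩ := masterX l α x hl2 hl1 hl4 ha1 ha2 hx1 hx2 hG m
  have hv := i3 hm
  have hd1 : 1 ≤ rosenD l α ((rosenT l α)^[m] x) :=
    d_ge_oneX l α _ hl2 hl1 hl4 ha1 ha2 hr1 hr2 hTne
  have hε : Real.sign ((rosenT l α)^[m] x) = -1 := Real.sign_of_neg hm
  have hiter : (rosenT l α)^[m+1] x = rosenT l α ((rosenT l α)^[m] x) :=
    Function.iterate_succ_apply' _ _ _
  have hT'eq : (rosenT l α)^[m+1] x
      = -1/((rosenT l α)^[m] x) - l * (rosenD l α ((rosenT l α)^[m] x) : ℝ) := by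
    rw [hiter, rosenT, if_neg hTne, hε]
  have hQ2 : rosenPQ l α x 0 1 (m+2)
      = (rosenD l α ((rosenT l α)^[m] x) : ℝ) * l * rosenPQ l α x 0 1 (m+1)
        + Real.sign ((rosenT l α)^[m] x) * rosenPQ l α x 0 1 m := rfl
  have hQ2' : rosenPQ l α x 0 1 (m+2)
      = (rosenD l α ((rosenT l α)^[m] x) : ℝ) * l * rosenPQ l α x 0 1 (m+1)
        + -1 * rosenPQ l α x 0 1 m := by rw [hQ2, hε]
  have hB := thetaB hl2 hl1 hl4 ha1 ha2 hx1 hx2 hG m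
  have hD := D_pos hl2 hl1 hl4 ha1 ha2 hx1 hx2 hG (m+1)
  rw [hidx] at hD
  have k1 : cc * (rosenPQ l α x 0 1 (m+1) * (rosenT l α)^[m+1] x + rosenPQ l α x 0 1 (m+2))
      ≤ rosenPQ l α x 0 1 (m+1) := by
    calc cc*_ ≤ rosenTheta l α x m * _ := mul_le_mul_of_nonneg_right h1 hD.le
    _ = _ := hB
  rw [hT'eq, hQ2'] at k1
  rw [hT'eq] at hm1 hr1'
  rw [hT'eq]
  set T := (rosenT l α)^[m] x with hT
  set dZ : ℤ := rosenD l α T with hdd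
  set Qm := rosenPQ l α x 0 1 m with hQm
  set Qm1 := rosenPQ l α x 0 1 (m+1) with hQm1
  clear_value T dZ Qm Qm1
  -- exclude d = 1
  have hdne1 : dZ ≠ 1 := by
    intro hd2
    have hpos : 0 < rosenT l α T :=
      T_pos_of_d_oneX l α T hl2 hl1 hl4 ha1 ha2 hm hr1 (by rw [← hdd]; exact hd2)
    rw [rosenT_negX l α T hm, ← hdd, hd2] at hpos
    push_cast at hpos
    rw [hd2] at hm1
    push_cast at hm1
    linarith
  -- exclude d ≥ 3
  have hdlt3 : ¬ (3 ≤ dZ) := by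
    intro hd3
    have hd3R : (3:ℝ) ≤ (dZ:ℝ) := by exact_mod_cast hd3
    exact arith10 hl1 hl4 ha1 hcc hd3R hv i2 hr1' k1
  have hd2 : dZ = 2 := by omega
  have hd2R : (dZ:ℝ) = 2 := by exact_mod_cast hd2
  rw [hd2R] at hm1
  refine ⟨hd2, ?_, ?_, by rw [hd2R]; ring⟩
  · have h6 : -1/T < 2*l := by linarith
    have e : (-1/T)*T = -1 := by field_simp
    have h7 := mul_lt_mul_of_neg_right h6 hm
    rw [e] at h7
    rw [lt_div_iff₀ (show (0:ℝ) < 2*l by linarith)]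
    linarith [h7]
  · exact d_two_lbX l α T hl2 hl1 hl4 ha1 ha2 hm (by rw [← hdd]; omega)

end withx

lemma D_posX (l α x : ℝ) (hl2 : l^2 = 2) (hl1 : 1.41 < l) (hl4 : l < 1.415)
    (ha1 : 1/2 < α) (ha2 : α * l < 1)
    (hx1 : (α-1)*l ≤ x) (hx2 : x < α*l) (hG : GIrrational l α x) (m : ℕ) :
    0 < rosenPQ l α x 0 1 m * (rosenT l α)^[m] x + rosenPQ l α x 0 1 (m+1) :=
  D_pos hl2 hl1 hl4 ha1 ha2 hx1 hx2 hG m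

lemma thetaBX (l α x : ℝ) (hl2 : l^2 = 2) (hl1 : 1.41 < l) (hl4 : l < 1.415)
    (ha1 : 1/2 < α) (ha2 : α * l < 1)
    (hx1 : (α-1)*l ≤ x) (hx2 : x < α*l) (hG : GIrrational l α x) (m : ℕ) :
    rosenTheta l α x m
      * (rosenPQ l α x 0 1 (m+1) * (rosenT l α)^[m+1] x + rosenPQ l α x 0 1 (m+2))
      = rosenPQ l α x 0 1 (m+1) :=
  thetaB hl2 hl1 hl4 ha1 ha2 hx1 hx2 hG m

lemma pair_negX (l α x : ℝ) (hl2 : l^2 = 2) (hl1 : 1.41 < l) (hl4 : l < 1.415)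
    (ha1 : 1/2 < α) (ha2 : α * l < 1)
    (hx1 : (α-1)*l ≤ x) (hx2 : x < α*l) (hG : GIrrational l α x)
    {cc : ℝ} (hcc : 1/2 < cc) (m : ℕ)
    (h1 : cc ≤ rosenTheta l α x m) (h2 : cc ≤ rosenTheta l α x (m+1)) :
    (rosenT l α)^[m+1] x < 0 :=
  pair_neg hl2 hl1 hl4 ha1 ha2 hx1 hx2 hG hcc m h1 h2

lemma digit_twoX (l α x : ℝ) (hl2 : l^2 = 2) (hl1 : 1.41 < l) (hl4 : l < 1.415)
    (ha1 : 1/2 < α) (ha2 : α * l < 1)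
    (hx1 : (α-1)*l ≤ x) (hx2 : x < α*l) (hG : GIrrational l α x)
    {cc : ℝ} (hcc : 1/2 < cc) (m : ℕ)
    (h1 : cc ≤ rosenTheta l α x m)
    (hm : (rosenT l α)^[m] x < 0) (hm1 : (rosenT l α)^[m+1] x < 0) :
    rosenD l α ((rosenT l α)^[m] x) = 2 ∧ (rosenT l α)^[m] x < -1/(2*l) ∧
      -(1/((α+1)*l)) ≤ (rosenT l α)^[m] x ∧
      (rosenT l α)^[m+1] x = -1/((rosenT l α)^[m] x) - 2*l :=
  digit_two hl2 hl1 hl4 ha1 ha2 hx1 hx2 hG hcc m h1 hm hm1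

-- pure arithmetic pieces for the final assembly
lemma arith11 {l cc τ T a b : ℝ} (hl1 : 1.41 < l) (hl4 : l < 1.415)
    (hτ1 : -1 < τ) (hτ2 : τ < 1-l) (hcc5 : 1/2 < cc)
    (hcceq : cc*(1 + τ*(l-1)) = l-1) (hT : τ ≤ T) (ha : 0 < a) (hb : 0 < b)
    (k1 : cc*(a*T + b) ≤ a) : (l-1)*b ≤ a := by
  have h1 : cc*(a*τ) ≤ cc*(a*T) :=
    mul_le_mul_of_nonneg_left (mul_le_mul_of_nonneg_left hT ha.le) (by linarith)
  have h2 : (l-1)*(1 - cc*τ) = cc := by linear_combination -1 * hcceq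
  have h3 : 0 < 1 - cc*τ := by nlinarith [mul_pos (show (0:ℝ) < cc by linarith) (show (0:ℝ) < -τ by linarith)]
  have h4 : cc*b ≤ a*(1-cc*τ) := by nlinarith [h1, k1]
  have h5 : ((l-1)*b)*(1-cc*τ) ≤ a*(1-cc*τ) := by
    calc ((l-1)*b)*(1-cc*τ) = cc*b := by linear_combination b * h2
    _ ≤ a*(1-cc*τ) := h4
  exact le_of_mul_le_mul_right h5 h3

lemma arith12 {l B δ T : ℝ} (hl2 : l^2 = 2) (hl1 : 1.41 < l) (hl4 : l < 1.415)
    (hB1l : 1 - l < B) (hB0 : B < 0) (hδ : δ = 2*((B+l)^2 - 1))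
    (h1 : B < T) (h2 : T < 0) : T + δ ≤ -1/T - 2*l := by
  have hδpos : 0 < δ := by
    rw [hδ]
    nlinarith [mul_pos (show (0:ℝ) < B+l-1 by nlinarith) (show (0:ℝ) < B+l+1 by nlinarith)]
  have key : δ*(-T) ≤ (T+l)^2 - 1 := by
    have k1 : δ*(-T) ≤ δ*(1/2) := mul_le_mul_of_nonneg_left (by linarith) hδpos.le
    have k2 : δ*(1/2) = (B+l)^2 - 1 := by rw [hδ]; ring
    have k3 : (B+l)^2 ≤ (T+l)^2 := by
      nlinarith [mul_nonneg (show (0:ℝ) ≤ T - B by linarith)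
        (show (0:ℝ) ≤ T + B + 2*l by nlinarith)]
    linarith
  have h3 : (T+δ+2*l)*(-T) ≤ 1 := by nlinarith [key, hl2]
  have e2 : -1/T = 1/(-T) := by rw [div_neg, neg_div]
  have h4 : T+δ+2*l ≤ -1/T := by
    rw [e2, le_div_iff₀ (show (0:ℝ) < -T by linarith)]
    linarith
  linarith

section tau
variable (hl2 : l^2 = 2) (hl1 : 1.41 < l) (hl4 : l < 1.415)
    (ha1 : 1/2 < α) (ha2 : α * l < 1)
    {τ : ℕ → ℝ} (hτ0 : τ 0 = -1 / ((α + 1) * l))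
    (hτ : ∀ k : ℕ, τ (k + 1) = -1 / (2 * l + τ k))

include hl2 hl1 hl4 ha1 ha2 hτ0 hτ

lemma tau_basic : ∀ j : ℕ, -1 < τ j ∧ τ j < 1 - l ∧ τ j < τ (j+1) := by
  have hl0 : 0 < l := by linarith
  have base : -1 < τ 0 ∧ τ 0 < 1 - l := by
    rw [hτ0]
    have h1 : 0 < (α+1)*l := by nlinarith
    constructor
    · rw [lt_div_iff₀ h1]; nlinarith
    · rw [div_lt_iff₀ h1]
      nlinarith [mul_pos (show (0:ℝ) < 1-α*l by linarith) (show (0:ℝ) < l-1 by linarith)]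
  have step : ∀ j, -1 < τ j → τ j < 1 - l → (-1 < τ (j+1) ∧ τ (j+1) < 1 - l ∧ τ j < τ (j+1)) := by
    intro j h1 h2
    have hp : 0 < 2*l + τ j := by linarith
    refine ⟨?_, ?_, ?_⟩
    · rw [hτ j, lt_div_iff₀ hp]; nlinarith
    · rw [hτ j, div_lt_iff₀ hp]
      nlinarith [mul_lt_mul_of_pos_right h2 (show (0:ℝ) < l-1 by linarith)]
    · rw [hτ j, lt_div_iff₀ hp]
      nlinarith [mul_neg_of_neg_of_pos (show τ j + l - 1 < 0 by linarith)
        (show (0:ℝ) < τ j + l + 1 by linarith)]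
  intro j
  induction j with
  | zero => exact ⟨base.1, base.2, (step 0 base.1 base.2).2.2⟩
  | succ j ih =>
      obtain ⟨a1, a2, -⟩ := step j ih.1 ih.2.1
      exact ⟨a1, a2, (step (j+1) a1 a2).2.2⟩

lemma tau_tendsto : Filter.Tendsto τ Filter.atTop (nhds (1 - l)) := by
  have hmono : Monotone τ :=
    (strictMono_nat_of_lt_succ (fun j => (tau_basic hl2 hl1 hl4 ha1 ha2 hτ0 hτ j).2.2)).monotone
  have hbdd : BddAbove (Set.range τ) := by
    refine ⟨1 - l, ?_⟩
    rintro _ ⟨j, rfl⟩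
    exact (tau_basic hl2 hl1 hl4 ha1 ha2 hτ0 hτ j).2.1.le
  have htend : Filter.Tendsto τ Filter.atTop (nhds (⨆ j, τ j)) :=
    tendsto_atTop_ciSup hmono hbdd
  set L := ⨆ j, τ j with hLdef
  have hL0 : τ 0 ≤ L := le_ciSup hbdd 0
  have hT0 : -1 < τ 0 := (tau_basic hl2 hl1 hl4 ha1 ha2 hτ0 hτ 0).1
  have h2lL : 0 < 2*l + L := by linarith
  have htend1 : Filter.Tendsto (fun j => τ (j+1)) Filter.atTop (nhds L) :=
    htend.comp (Filter.tendsto_add_atTop_nat 1)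
  have htend2 : Filter.Tendsto (fun j => -1/(2*l + τ j)) Filter.atTop
      (nhds (-1/(2*l + L))) :=
    Filter.Tendsto.div tendsto_const_nhds (tendsto_const_nhds.add htend) (ne_of_gt h2lL)
  have hLfix : -1/(2*l+L) = L :=
    tendsto_nhds_unique (htend2.congr (fun j => (hτ j).symm)) htend1
  rw [div_eq_iff (ne_of_gt h2lL)] at hLfix
  have he : L*(2*l+L) = -1 := by linarith
  have hfac : (L + l - 1)*(L + l + 1) = 0 := by linear_combination he + hl2
  rcases mul_eq_zero.mp hfac with h | h
  · have : L = 1 - l := by linarith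
    rwa [this] at htend
  · exfalso; nlinarith
end tau

lemma tau_basicX (l α : ℝ) (hl2 : l^2 = 2) (hl1 : 1.41 < l) (hl4 : l < 1.415)
    (ha1 : 1/2 < α) (ha2 : α * l < 1)
    (τ : ℕ → ℝ) (hτ0 : τ 0 = -1 / ((α + 1) * l))
    (hτ : ∀ k : ℕ, τ (k + 1) = -1 / (2 * l + τ k)) :
    ∀ j : ℕ, -1 < τ j ∧ τ j < 1 - l ∧ τ j < τ (j+1) :=
  tau_basic hl2 hl1 hl4 ha1 ha2 hτ0 hτ

lemma tau_tendstoX (l α : ℝ) (hl2 : l^2 = 2) (hl1 : 1.41 < l) (hl4 : l < 1.415)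
    (ha1 : 1/2 < α) (ha2 : α * l < 1)
    (τ : ℕ → ℝ) (hτ0 : τ 0 = -1 / ((α + 1) * l))
    (hτ : ∀ k : ℕ, τ (k + 1) = -1 / (2 * l + τ k)) :
    Filter.Tendsto τ Filter.atTop (nhds (1 - l)) :=
  tau_tendsto hl2 hl1 hl4 ha1 ha2 hτ0 hτ

end Tong4

set_option maxHeartbeats 2000000 in
open Tong4 in
/-- **Tong's spectrum for `q = 4`** (Theorem 3.4).  For `λ = √2` and
`α ∈ (1/2, 1/√2)`, with `τ_0 = -1/((α+1)√2)`, `τ_k = -1/(2√2 + τ_{k-1})` and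
`c_k = (√2-1)/(1 + τ_{k-1}(√2-1))`, there is a positive integer `K` such that for
every `G_4`-irrational number `x`, all `n ≥ 1` and `k > K`,
`min{Θ_{n-1}, Θ_n, …, Θ_{n+k}} < c_k`; moreover `c_{k+1} < c_k` and `c_k → 1/2`. -/
theorem tong_q_four (α : ℝ) (hα : α ∈ Set.Ioo (1 / 2 : ℝ) (1 / Real.sqrt 2))
    (τ : ℕ → ℝ) (hτ0 : τ 0 = -1 / ((α + 1) * Real.sqrt 2))
    (hτ : ∀ k : ℕ, τ (k + 1) = -1 / (2 * Real.sqrt 2 + τ k))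
    (c : ℕ → ℝ)
    (hc : ∀ k : ℕ, 1 ≤ k →
      c k = (Real.sqrt 2 - 1) / (1 + τ (k - 1) * (Real.sqrt 2 - 1))) :
    (∃ K : ℕ, 0 < K ∧
      ∀ x ∈ Set.Ico ((α - 1) * Real.sqrt 2) (α * Real.sqrt 2),
        GIrrational (Real.sqrt 2) α x →
        ∀ n k : ℕ, 1 ≤ n → K < k →
          ∃ m : ℕ, n - 1 ≤ m ∧ m ≤ n + k ∧ rosenTheta (Real.sqrt 2) α x m < c k) ∧
    (∀ k : ℕ, 1 ≤ k → c (k + 1) < c k) ∧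
    Filter.Tendsto c Filter.atTop (nhds (1 / 2)) := by
  obtain ⟨ha1, ha2'⟩ := hα
  set l := Real.sqrt 2 with hldef
  have hl0 : (0:ℝ) < l := Real.sqrt_pos.mpr (by norm_num)
  have hl2 : l^2 = 2 := Real.sq_sqrt (by norm_num)
  have hl1 : 1.41 < l := by nlinarith
  have hl4 : l < 1.415 := by nlinarith
  have ha2 : α * l < 1 := (lt_div_iff₀ hl0).mp ha2'
  clear_value l
  have hal : 0 < α*l := by nlinarith
  -- constants
  set B := (1-2*α)/(α*l) with hBdef
  have hB0 : B < 0 := div_neg_of_neg_of_pos (by linarith) hal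
  have hB1l : 1 - l < B := by
    have e6 : B - (1-l) = (1-α*l)/(α*l) := by
      rw [hBdef]; field_simp; linear_combination α * hl2
    have : 0 < (1-α*l)/(α*l) := div_pos (by linarith) hal
    linarith
  clear_value B
  set δ := 2*((B+l)^2 - 1) with hδdef
  have hδpos : 0 < δ := by
    rw [hδdef]
    nlinarith [mul_pos (show (0:ℝ) < B+l-1 by nlinarith) (show (0:ℝ) < B+l+1 by nlinarith)]
  clear_value δ
  obtain ⟨K0, hK0⟩ := exists_nat_gt ((-B)/δ)
  refine ⟨⟨K0 + 1, Nat.succ_pos _, ?_⟩, ?_, ?_⟩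
  · -- main part
    intro x hx hGx n k hn hkK
    obtain ⟨hx1, hx2⟩ := hx
    by_contra hcon
    push_neg at hcon
    obtain ⟨n, rfl⟩ : ∃ n', n = n'+1 := ⟨n-1, (Nat.succ_pred_eq_of_pos hn).symm⟩
    have hk2 : 2 ≤ k := by omega
    have hccdef := hc k (by omega)
    set cc := c k with hccdefn
    clear_value cc
    have hbk := tau_basicX l α hl2 hl1 hl4 ha1 ha2 τ hτ0 hτ (k-1)
    have hden : 0 < 1 + τ (k-1)*(l-1) := by
      nlinarith [mul_lt_mul_of_pos_right hbk.1 (show (0:ℝ) < l-1 by linarith)]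
    have hcc5 : 1/2 < cc := by
      rw [hccdef, lt_div_iff₀ hden]
      nlinarith [mul_lt_mul_of_pos_right hbk.2.1 (show (0:ℝ) < l-1 by linarith)]
    have hcceq : cc*(1 + τ (k-1)*(l-1)) = l-1 := by
      rw [hccdef]; exact div_mul_cancel₀ _ hden.ne'
    have hcon' : ∀ i, i ≤ k+1 → cc ≤ rosenTheta l α x (n+i) := by
      intro i hi; exact hcon (n+i) (by omega) (by omega)
    have hneg : ∀ i, 1 ≤ i → i ≤ k+1 → (rosenT l α)^[n+i] x < 0 := by
      intro i h1 h2
      obtain ⟨j, rfl⟩ : ∃ j, i = j+1 := ⟨i-1, (Nat.succ_pred_eq_of_pos h1).symm⟩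
      have e : n + (j+1) = (n+j)+1 := rfl
      rw [e]
      refine pair_negX l α x hl2 hl1 hl4 ha1 ha2 hx1 hx2 hGx hcc5 (n+j)
        (hcon' j (by omega)) ?_
      have h3 := hcon' (j+1) (by omega); rwa [e] at h3
    have hd2 : ∀ i, 1 ≤ i → i+1 ≤ k+1 →
        (rosenD l α ((rosenT l α)^[n+i] x) = 2 ∧ (rosenT l α)^[n+i] x < -1/(2*l) ∧
          -(1/((α+1)*l)) ≤ (rosenT l α)^[n+i] x ∧
          (rosenT l α)^[(n+i)+1] x = -1/((rosenT l α)^[n+i] x) - 2*l) := by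
      intro i h1 h2
      refine digit_twoX l α x hl2 hl1 hl4 ha1 ha2 hx1 hx2 hGx hcc5 (n+i)
        (hcon' i (by omega)) (hneg i h1 (by omega)) ?_
      have e : n + (i+1) = (n+i)+1 := rfl
      have h3 := hneg (i+1) (by omega) (by omega); rwa [e] at h3
    have ladder : ∀ j, j ≤ k-1 → τ j ≤ (rosenT l α)^[n + (k - j)] x := by
      intro j
      induction j with
      | zero =>
          intro _
          have h3 := (hd2 k (by omega) (by omega)).2.2.1
          rw [Nat.sub_zero, hτ0, neg_div]
          exact h3
      | succ j ih =>
          intro hj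
          have prev := ih (by omega)
          have hjb := tau_basicX l α hl2 hl1 hl4 ha1 ha2 τ hτ0 hτ j
          have hi1 : (1:ℕ) ≤ k - (j+1) := by omega
          obtain ⟨-, -, -, heq⟩ := hd2 (k-(j+1)) hi1 (by omega)
          have hTneg : (rosenT l α)^[n + (k-(j+1))] x < 0 := hneg _ hi1 (by omega)
          have e : n + (k - j) = (n + (k-(j+1))) + 1 := by omega
          rw [e, heq] at prev
          set T := (rosenT l α)^[n + (k-(j+1))] x
          have hTne' : T ≠ 0 := ne_of_lt hTneg
          have hp : 0 < 2*l + τ j := by linarith [hjb.1]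
          have h1 : 2*l + τ j ≤ -1/T := by linarith
          have e5 : (-1/T)*T = -1 := by field_simp
          have h2 := mul_le_mul_of_nonpos_right h1 hTneg.le
          rw [e5] at h2
          rw [hτ j, div_le_iff₀ hp]
          linarith
    have tlad : τ (k-1) ≤ (rosenT l α)^[n+1] x := by
      have h3 := ladder (k-1) le_rfl
      have e : k - (k-1) = 1 := by omega
      rwa [e] at h3
    obtain ⟨-, i2a, -, -, -, -⟩ := masterX l α x hl2 hl1 hl4 ha1 ha2 hx1 hx2 hGx n
    obtain ⟨-, i2b, -, i4b, -, -⟩ := masterX l α x hl2 hl1 hl4 ha1 ha2 hx1 hx2 hGx (n+1)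
    have hidx : n+1+1 = n+2 := rfl
    rw [hidx] at i2b i4b
    have hDn := D_posX l α x hl2 hl1 hl4 ha1 ha2 hx1 hx2 hGx (n+1)
    rw [hidx] at hDn
    have hBn := thetaBX l α x hl2 hl1 hl4 ha1 ha2 hx1 hx2 hGx n
    have k1 : cc * (rosenPQ l α x 0 1 (n+1) * (rosenT l α)^[n+1] x
        + rosenPQ l α x 0 1 (n+2)) ≤ rosenPQ l α x 0 1 (n+1) := by
      have h0 := hcon' 0 (by omega)
      rw [Nat.add_zero] at h0
      calc cc * _ ≤ rosenTheta l α x n * _ := mul_le_mul_of_nonneg_right h0 hDn.le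
      _ = _ := hBn
    have hvn : (l-1) * rosenPQ l α x 0 1 (n+2) ≤ rosenPQ l α x 0 1 (n+1) :=
      arith11 hl1 hl4 hbk.1 hbk.2.1 hcc5 hcceq tlad i2a i2b k1
    have hBt : B < (rosenT l α)^[n+1] x := by
      rw [← hBdef] at i4b
      rcases i4b with h | h
      · exfalso; linarith
      · exact h
    have escape : ∀ j : ℕ, j ≤ k-1 → B + (j:ℝ)*δ < (rosenT l α)^[n+1+j] x := by
      intro j
      induction j with
      | zero => intro _; simpa using hBt
      | succ j ih =>
          intro hj
          have prev := ih (by omega)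
          have h1i : (1:ℕ) ≤ 1+j := by omega
          obtain ⟨-, -, -, heq⟩ := hd2 (1+j) h1i (by omega)
          have hTneg : (rosenT l α)^[n+(1+j)] x < 0 := hneg (1+j) h1i (by omega)
          have e : n+1+j = n+(1+j) := by omega
          rw [e] at prev
          have hBT : B < (rosenT l α)^[n+(1+j)] x := by
            nlinarith [prev, mul_nonneg (Nat.cast_nonneg j : (0:ℝ) ≤ (j:ℝ)) hδpos.le]
          have hstep := arith12 hl2 hl1 hl4 hB1l hB0 hδdef hBT hTneg
          have e2 : n+1+(j+1) = (n+(1+j))+1 := by omega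
          rw [e2, heq]
          push_cast
          linarith
    have hlast := escape (k-1) le_rfl
    have hnegk : (rosenT l α)^[n+k] x < 0 := hneg k (by omega) (by omega)
    have e : n+1+(k-1) = n+k := by omega
    rw [e] at hlast
    have hKk : ((K0:ℕ):ℝ) + 1 ≤ ((k-1 : ℕ):ℝ) := by
      have h7 : K0 + 1 ≤ k - 1 := by omega
      exact_mod_cast h7
    have h6 : ((-B)/δ)*δ = -B := div_mul_cancel₀ _ (ne_of_gt hδpos)
    have hpos : 0 < B + ((k-1:ℕ):ℝ)*δ := by
      have h5 : (-B)/δ + 1 ≤ ((k-1:ℕ):ℝ) := by linarith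
      nlinarith [mul_le_mul_of_nonneg_right h5 hδpos.le]
    linarith
  · -- monotone
    intro k hk
    have hk1 : k - 1 + 1 = k := Nat.succ_pred_eq_of_pos hk
    have e1 := hc k hk
    have e2 := hc (k+1) (by omega)
    rw [Nat.add_sub_cancel] at e2
    have hb1 := tau_basicX l α hl2 hl1 hl4 ha1 ha2 τ hτ0 hτ (k-1)
    have hb2 := tau_basicX l α hl2 hl1 hl4 ha1 ha2 τ hτ0 hτ k
    have hmt : τ (k-1) < τ k := by
      have h3 := hb1.2.2; rwa [hk1] at h3
    have hd1 : 0 < 1 + τ (k-1)*(l-1) := by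
      nlinarith [mul_lt_mul_of_pos_right hb1.1 (show (0:ℝ) < l-1 by linarith)]
    rw [e1, e2]
    apply div_lt_div_of_pos_left (by linarith : (0:ℝ) < l-1) hd1
    nlinarith [mul_lt_mul_of_pos_right hmt (show (0:ℝ) < l-1 by linarith)]
  · -- limit
    have hta := tau_tendstoX l α hl2 hl1 hl4 ha1 ha2 τ hτ0 hτ
    have ht3 : Filter.Tendsto (fun k : ℕ => τ (k-1)) Filter.atTop (nhds (1-l)) :=
      hta.comp (Filter.tendsto_sub_atTop_nat 1)
    have hne : (1:ℝ) + (1-l)*(l-1) ≠ 0 := by nlinarith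
    have hc' : Filter.Tendsto (fun k => (l-1)/(1 + τ (k-1)*(l-1))) Filter.atTop
        (nhds ((l-1)/(1 + (1-l)*(l-1)))) :=
      Filter.Tendsto.div tendsto_const_nhds
        (tendsto_const_nhds.add (ht3.mul tendsto_const_nhds)) hne
    have hval : (l-1)/(1 + (1-l)*(l-1)) = 1/2 := by
      have e : 1 + (1-l)*(l-1) = 2*(l-1) := by linear_combination -1*hl2
      rw [e, div_eq_div_iff (by nlinarith) (by norm_num)]; ring
    rw [show (1:ℝ)/2 = (l-1)/(1 + (1-l)*(l-1)) from hval.symm]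
    apply Filter.Tendsto.congr' _ hc'
    filter_upwards [Filter.eventually_ge_atTop 1] with k hk
    exact (hc k hk).symm
end

section
/- Let q = 4, λ = √2, and α ∈ (1/2, 1/√2). With Ω_α, f, g, D and r_1 = T_α(α√2) as in the context, one has D = {(t,v) ∈ Ω_α : t < 1−√2 and v > f(t)} ∪ {(t,v) ∈ Ω_α : r_1 ≤ t < 0 and v > g(t)}, and the second set is nonempty if and only if α > α_0 = (4+√2)/8. -/
/-- `l_n = T_α^n((α-1)λ)`, the orbit of the left endpoint. -/
noncomputable def lseq (lam α : ℝ) (n : ℕ) : ℝ := (rosenT lam α)^[n] ((α - 1) * lam)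

/-- `r_n = T_α^n(αλ)`, the orbit of the right endpoint. -/
noncomputable def rseq (lam α : ℝ) (n : ℕ) : ℝ := (rosenT lam α)^[n] (α * lam)

/-- The natural extension domain `Ω_α` for `q = 4`, `λ = √2`:
`Ω_α = [l_0,r_1)×[0,H_1] ∪ [r_1,l_1)×[0,H_2] ∪ [l_1,r_0)×[0,H_3]` with
`H_1 = 1/(√2+1)`, `H_2 = 1/√2`, `H_3 = 1`. -/
noncomputable def Omega4 (α : ℝ) : Set (ℝ × ℝ) :=
  Set.Ico (lseq (Real.sqrt 2) α 0) (rseq (Real.sqrt 2) α 1) ×ˢ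
      Set.Icc (0 : ℝ) (1 / (Real.sqrt 2 + 1)) ∪
    Set.Ico (rseq (Real.sqrt 2) α 1) (lseq (Real.sqrt 2) α 1) ×ˢ
      Set.Icc (0 : ℝ) (1 / Real.sqrt 2) ∪
    Set.Ico (lseq (Real.sqrt 2) α 1) (rseq (Real.sqrt 2) α 0) ×ˢ Set.Icc (0 : ℝ) 1

/-- `f(x) = ℋ₄/(1 - ℋ₄ x)` with `ℋ₄ = 1/2`. -/
noncomputable def f4 (x : ℝ) : ℝ := (1 / 2) / (1 - (1 / 2) * x)

/-- `g(x) = (|x| - ℋ₄)/(ℋ₄ x)` with `ℋ₄ = 1/2`. -/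
noncomputable def g4 (x : ℝ) : ℝ := (|x| - 1 / 2) / ((1 / 2) * x)

/-- The region `D ⊆ Ω_α` where `min{Θ_{n-1}, Θ_n} > ℋ₄ = 1/2`. -/
noncomputable def D4 (α : ℝ) : Set (ℝ × ℝ) :=
  {tv ∈ Omega4 α |
    1 / 2 < tv.2 / (1 + tv.1 * tv.2) ∧ 1 / 2 < |tv.1| / (1 + tv.1 * tv.2)}

set_option maxHeartbeats 4000000 in
/-- **Lemma 3.5** (shape of `D` for `q = 4`).  For `α ∈ (1/2, 1/√2)`,
`D = {(t,v) ∈ Ω_α : t < 1-√2, v > f(t)} ∪ {(t,v) ∈ Ω_α : r_1 ≤ t < 0, v > g(t)}`,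
and the second component is nonempty iff `α > α₀ = (4+√2)/8`. -/
theorem shape_D_q_four (α : ℝ) (hα : α ∈ Set.Ioo (1 / 2 : ℝ) (1 / Real.sqrt 2)) :
    D4 α =
      {tv ∈ Omega4 α | tv.1 < 1 - Real.sqrt 2 ∧ f4 tv.1 < tv.2} ∪
        {tv ∈ Omega4 α | rseq (Real.sqrt 2) α 1 ≤ tv.1 ∧ tv.1 < 0 ∧ g4 tv.1 < tv.2} ∧
    ({tv ∈ Omega4 α | rseq (Real.sqrt 2) α 1 ≤ tv.1 ∧ tv.1 < 0 ∧ g4 tv.1 < tv.2}.Nonempty ↔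
      (4 + Real.sqrt 2) / 8 < α) := by
  obtain ⟨hα1, hα2⟩ := hα
  have hs2 : Real.sqrt 2 ^ 2 = 2 := Real.sq_sqrt (by norm_num)
  set s := Real.sqrt 2 with hsdef
  have hs0 : (0:ℝ) < s := Real.sqrt_pos.mpr (by norm_num)
  have hs1 : 1 < s := by nlinarith
  have hs32 : s < 3/2 := by nlinarith
  have hα0 : (0:ℝ) < α := by linarith
  have hαs1 : α * s < 1 := by rw [lt_div_iff₀ hs0] at hα2; exact hα2
  have hα1' : α < 1 := by nlinarith
  have hαs0 : 0 < α * s := mul_pos hα0 hs0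
  have h1mα : (0:ℝ) < 1 - α := by linarith
  have h2α2 : 2 * α^2 < 1 := by
    nlinarith [mul_lt_mul_of_pos_left hαs1 hαs0,
      (by linear_combination α^2 * hs2 : α*s*(α*s) = 2*α^2)]
  -- value of r₁
  have hr1 : rseq s α 1 = (1 - 2*α)/(α * s) := by
    have hinvα : 2*α*(1/(2*α)) = 1 := mul_one_div_cancel (by linarith)
    have hdr : rosenD s α (α * s) = 1 := by
      have h1 : s * (α * s) = 2*α := by linear_combination α * hs2
      have habs : |1 / (s * (α * s))| = 1/(2*α) := by
        rw [h1, abs_of_pos (by positivity)]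
      rw [rosenD, habs, Int.floor_eq_iff]
      push_cast
      constructor
      · nlinarith [hinvα, h2α2, hα0]
      · nlinarith [hinvα, hα0]
    rw [rseq, Function.iterate_one, rosenT, if_neg (ne_of_gt hαs0), hdr,
        Real.sign_of_pos hαs0]
    push_cast
    field_simp
    linear_combination (-α) * hs2
  -- value of l₁
  have hl0neg : (α - 1) * s < 0 := mul_neg_of_neg_of_pos (by linarith) hs0
  have hl1 : lseq s α 1 = (2*α - 1)/((1-α) * s) := by
    have hinvβ : (2*(1-α))*(1/(2*(1-α))) = 1 := mul_one_div_cancel (by linarith)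
    have hdl : rosenD s α ((α-1) * s) = 1 := by
      have h1 : (1:ℝ) / (s * ((α-1) * s)) = -(1/(2*(1-α))) := by
        have h2 : s * ((α-1) * s) = 2*(α-1) := by linear_combination (α-1) * hs2
        rw [h2, show (2:ℝ)*(α-1) = -(2*(1-α)) by ring, div_neg]
      have habs : |1 / (s * ((α-1) * s))| = 1/(2*(1-α)) := by
        rw [h1, abs_neg, abs_of_pos (by positivity)]
      rw [rosenD, habs, Int.floor_eq_iff]
      push_cast
      constructor
      · nlinarith [hinvβ, sq_nonneg (2*α-1), h1mα]
      · nlinarith [hinvβ, h1mα, h2α2]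
    have hne : (α-1)*s ≠ 0 := ne_of_lt hl0neg
    have hden : ((1-α)*s) ≠ 0 := by positivity
    rw [lseq, Function.iterate_one, rosenT, if_neg hne, hdl,
        Real.sign_of_neg hl0neg]
    push_cast
    field_simp [hne, hden, sub_ne_zero.mpr (ne_of_lt hα1')]
    ring_nf
    linear_combination ((α-1)^2) * hs2
  have hl0v : lseq s α 0 = (α-1) * s := by simp [lseq]
  have hr0v : rseq s α 0 = α * s := by simp [rseq]
  have hl1pos : 0 < lseq s α 1 := by
    rw [hl1]; exact div_pos (by linarith) (mul_pos h1mα hs0)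
  have hr1neg : rseq s α 1 < 0 := by
    rw [hr1]; exact div_neg_of_neg_of_pos (by linarith) hαs0
  have hr1gt : 1 - s < rseq s α 1 := by
    rw [hr1, lt_div_iff₀ hαs0]
    nlinarith [(by linear_combination α * hs2 : s*(α*s) = 2*α)]
  have hl1lt : lseq s α 1 < α * s := by
    rw [hl1, div_lt_iff₀ (mul_pos h1mα hs0)]
    nlinarith [(by linear_combination α*(1-α) * hs2 : α*s*((1-α)*s) = 2*α*(1-α)), h2α2]
  -- bounds from Ω
  have hbdd : ∀ t v : ℝ, (t, v) ∈ Omega4 α → -1 < t ∧ t < α * s ∧ 0 ≤ v ∧ v ≤ 1 := by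
    intro t v hΩ
    simp only [Omega4, ← hsdef, Set.mem_union, Set.mem_prod, Set.mem_Ico,
      Set.mem_Icc] at hΩ
    have hH1 : 1/(s+1) ≤ (1:ℝ) := by rw [div_le_one (by linarith)]; linarith
    have hH2 : 1/s ≤ (1:ℝ) := by rw [div_le_one hs0]; linarith
    rcases hΩ with (⟨⟨h1, h2⟩, h3, h4⟩ | ⟨⟨h1, h2⟩, h3, h4⟩) | ⟨⟨h1, h2⟩, h3, h4⟩
    · rw [hl0v] at h1
      exact ⟨by nlinarith, by linarith [hr1neg], h3, le_trans h4 hH1⟩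
    · exact ⟨by linarith [hr1gt, hs32], by linarith [hl1lt], h3, le_trans h4 hH2⟩
    · exact ⟨by linarith [hl1pos], by rw [hr0v] at h2; exact h2, h3, h4⟩
  -- membership helper: below r₁ one is in the first strip
  have hJ1 : ∀ t v : ℝ, (t, v) ∈ Omega4 α → t < rseq s α 1 → v ≤ 1/(s+1) := by
    intro t v hΩ ht
    simp only [Omega4, ← hsdef, Set.mem_union, Set.mem_prod, Set.mem_Ico,
      Set.mem_Icc] at hΩ
    rcases hΩ with (⟨⟨h1, h2⟩, h3, h4⟩ | ⟨⟨h1, h2⟩, h3, h4⟩) | ⟨⟨h1, h2⟩, h3, h4⟩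
    · exact h4
    · linarith
    · linarith [hl1pos, hr1neg]
  have hJ2 : ∀ t v : ℝ, (t, v) ∈ Omega4 α → rseq s α 1 ≤ t → t < 0 → v ≤ 1/s := by
    intro t v hΩ ht ht0
    simp only [Omega4, ← hsdef, Set.mem_union, Set.mem_prod, Set.mem_Ico,
      Set.mem_Icc] at hΩ
    rcases hΩ with (⟨⟨h1, h2⟩, h3, h4⟩ | ⟨⟨h1, h2⟩, h3, h4⟩) | ⟨⟨h1, h2⟩, h3, h4⟩
    · linarith
    · exact h4
    · linarith [hl1pos]
  constructor
  · -- the set identity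
    ext ⟨t, v⟩
    simp only [D4, Set.mem_union, Set.mem_setOf_eq]
    constructor
    · rintro ⟨hΩ, hc1, hc2⟩
      obtain ⟨htm1, htlt, hv0, hv1⟩ := hbdd t v hΩ
      have htlt1 : t < 1 := by linarith
      have h1tv : 0 < 1 + t * v := by
        rcases eq_or_lt_of_le hv0 with h | h
        · rw [← h]; norm_num
        · nlinarith [mul_pos (by linarith : (0:ℝ) < 1 + t) h]
      rw [lt_div_iff₀ h1tv] at hc1 hc2
      have ht0 : t < 0 := by
        by_contra hcon
        push_neg at hcon
        rw [abs_of_nonneg hcon] at hc2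
        have hA : 1 < v * (2 - t) := by nlinarith
        have hB : t * v < 2*t - 1 := by nlinarith [mul_nonneg hcon hv0]
        have p1 : t * 1 ≤ t * (v * (2 - t)) :=
          mul_le_mul_of_nonneg_left hA.le hcon
        have p2 : (t*v) * (2 - t) < (2*t - 1) * (2 - t) :=
          mul_lt_mul_of_pos_right hB (by linarith)
        nlinarith [p1, p2, sq_nonneg (t - 1)]
      rw [abs_of_neg ht0] at hc2
      rcases lt_or_ge t (1 - s) with hts | hts
      · left
        refine ⟨hΩ, hts, ?_⟩
        rw [f4, div_lt_iff₀ (by nlinarith : (0:ℝ) < 1 - 1/2 * t)]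
        nlinarith
      · right
        refine ⟨hΩ, ?_, ht0, ?_⟩
        · by_contra hcon
          push_neg at hcon
          have hv4 := hJ1 t v hΩ hcon
          have hv4' : v * (s + 1) ≤ 1 := (le_div_iff₀ (by linarith)).mp hv4
          nlinarith [mul_nonneg hv0 (by linarith : (0:ℝ) ≤ t - (1 - s))]
        · rw [g4, abs_of_neg ht0,
            div_lt_iff_of_neg (by linarith : (1:ℝ)/2 * t < 0)]
          nlinarith
    · rintro (⟨hΩ, hts, hfv⟩ | ⟨hΩ, hrt, ht0, hgv⟩)
      · obtain ⟨htm1, htlt, hv0, hv1⟩ := hbdd t v hΩ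
        have ht0 : t < 0 := by linarith
        have h1tv : 0 < 1 + t * v := by
          rcases eq_or_lt_of_le hv0 with h | h
          · rw [← h]; norm_num
          · nlinarith [mul_pos (by linarith : (0:ℝ) < 1 + t) h]
        rw [f4, div_lt_iff₀ (by nlinarith : (0:ℝ) < 1 - 1/2 * t)] at hfv
        have hsq : 2 < (1 - t)^2 := by nlinarith
        refine ⟨hΩ, ?_, ?_⟩
        · rw [lt_div_iff₀ h1tv]; nlinarith
        · rw [lt_div_iff₀ h1tv, abs_of_neg ht0]
          have p1 : t * (v * (1 - 1/2 * t)) < t * (1/2) :=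
            mul_lt_mul_of_neg_left hfv ht0
          nlinarith [p1, hsq, (by linarith : (0:ℝ) < 2 - t)]
      · obtain ⟨htm1, htlt, hv0, hv1⟩ := hbdd t v hΩ
        have h1tv : 0 < 1 + t * v := by
          rcases eq_or_lt_of_le hv0 with h | h
          · rw [← h]; norm_num
          · nlinarith [mul_pos (by linarith : (0:ℝ) < 1 + t) h]
        rw [g4, abs_of_neg ht0,
          div_lt_iff_of_neg (by linarith : (1:ℝ)/2 * t < 0)] at hgv
        have hB : t * v < -2*t - 1 := by nlinarith
        have hsqlt : (1 - t)^2 < 2 := by nlinarith [hr1gt]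
        refine ⟨hΩ, ?_, ?_⟩
        · rw [lt_div_iff₀ h1tv]
          have p2 : (t*v) * (2 - t) < (-2*t - 1) * (2 - t) :=
            mul_lt_mul_of_pos_right hB (by linarith)
          nlinarith [p2, hsqlt, ht0]
        · rw [lt_div_iff₀ h1tv, abs_of_neg ht0]; nlinarith
  · -- nonemptiness criterion
    have key : rseq s α 1 * (α * s) = 1 - 2*α := by
      rw [hr1]; field_simp
    have hαss2 : α * s * s = 2 * α := by linear_combination α * hs2
    constructor
    · rintro ⟨⟨t, v⟩, hp⟩
      simp only [Set.mem_setOf_eq] at hp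
      obtain ⟨hΩ, hrt, ht0, hgv⟩ := hp
      have hvle := hJ2 t v hΩ hrt ht0
      rw [g4, abs_of_neg ht0,
        div_lt_iff_of_neg (by linarith : (1:ℝ)/2 * t < 0)] at hgv
      have hB : t * v < -2*t - 1 := by nlinarith
      have hvs : v * s ≤ 1 := (le_div_iff₀ hs0).mp hvle
      have h2 : t * (1 + 2*s) < -s := by
        nlinarith [mul_lt_mul_of_pos_right hB hs0,
          mul_le_mul_of_nonpos_left hvs (le_of_lt ht0)]
      have hrt' : 1 - 2*α ≤ t * (α * s) := by
        rw [hr1, div_le_iff₀ hαs0] at hrt; exact hrt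
      have h3 : (1 - 2*α) * (1 + 2*s) < -2*α := by
        nlinarith [h2, hrt', hαs0, hαss2, (by linarith : (0:ℝ) < 1 + 2*s),
          mul_lt_mul_of_pos_left h2 hαs0,
          mul_le_mul_of_nonneg_right hrt' (by linarith : (0:ℝ) ≤ 1 + 2*s)]
      nlinarith [h3, hs0, hs2]
    · intro h8α
      refine ⟨(rseq s α 1, 1/s), ?_⟩
      simp only [Set.mem_setOf_eq]
      refine ⟨?_, le_refl _, hr1neg, ?_⟩
      · simp only [Omega4, ← hsdef, Set.mem_union, Set.mem_prod, Set.mem_Ico,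
          Set.mem_Icc]
        exact Or.inl (Or.inr ⟨⟨le_refl _, by linarith [hl1pos]⟩, by positivity,
          le_refl _⟩)
      · rw [g4, abs_of_neg hr1neg,
          div_lt_iff_of_neg (by linarith [hr1neg] : (1:ℝ)/2 * rseq s α 1 < 0)]
        have k2 : rseq s α 1 * (α * s) * s = (1 - 2*α) * s := by
          linear_combination s * key
        have h8s : 2*s + 1 < 4*α*s := by nlinarith [h8α, hs0, hs2]
        rw [show (1:ℝ)/s * (1/2 * rseq s α 1) = rseq s α 1 / (2*s) by ring,
          div_lt_iff₀ (by positivity : (0:ℝ) < 2*s)]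
        nlinarith [key, k2, hαss2, h8s, hαs0]
end

section
/- Let q = 4, λ = √2, α ∈ (1/2, 1/√2), and δ_1 = 1/((α+1)√2). For every (t,v) ∈ ℝ² with −δ_1 ≤ t < 1−√2 and 1/(2−t) < v ≤ √2−1 one has v/(1+tv) ≤ −t/(1+tv) ≤ −(1+2√2·t)·(2√2−v)/(1+tv). (These three quantities are the consecutive approximation coefficients Θ_{n−1}, Θ_n, Θ_{n+1} at a point of the region D_{1,k}, k ≥ 1, of the natural extension, where the next digit is d = 2 with ε_{n+1} = ε_{n+2} = −1.) -/
/-- **Lemma 3.6** (ordering of consecutive approximation coefficients on `D_{1,k}`,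
`q = 4`).  For `α ∈ (1/2, 1/√2)`, `δ₁ = 1/((α+1)√2)` and any `(t,v)` with
`-δ₁ ≤ t < 1-√2` and `1/(2-t) < v ≤ √2-1` one has
`Θ_{n-1} = v/(1+tv) ≤ Θ_n = -t/(1+tv) ≤ Θ_{n+1} = -(1+2√2t)(2√2-v)/(1+tv)`. -/
theorem theta_order_q_four (α t v : ℝ)
    (hα : α ∈ Set.Ioo (1 / 2 : ℝ) (1 / Real.sqrt 2))
    (ht1 : -(1 / ((α + 1) * Real.sqrt 2)) ≤ t) (ht2 : t < 1 - Real.sqrt 2)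
    (hv1 : 1 / (2 - t) < v) (hv2 : v ≤ Real.sqrt 2 - 1) :
    v / (1 + t * v) ≤ -t / (1 + t * v) ∧
    -t / (1 + t * v) ≤
      -((1 + 2 * Real.sqrt 2 * t) * (2 * Real.sqrt 2 - v)) / (1 + t * v) := by
  obtain ⟨hα1, hα2⟩ := hα
  set s := Real.sqrt 2 with hs_def
  have hs2 : s * s = 2 := Real.mul_self_sqrt (by norm_num)
  have hs_pos : 0 < s := Real.sqrt_pos.mpr (by norm_num)
  have hs_lb : (1.4 : ℝ) < s := by nlinarith
  have hs_ub : s < 1.5 := by nlinarith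
  -- t is negative
  have htneg : t < 0 := by linarith
  -- v is positive
  have h2t : 0 < 2 - t := by linarith
  have hv0 : 0 < v := lt_trans (by positivity) hv1
  -- lower bound on t : from ht1, t * ((α+1)*s) ≥ -1 and (α+1)*s > 2.1
  have hc : 0 < (α + 1) * s := by positivity
  have hkey : -1 ≤ t * ((α + 1) * s) := by
    have : (-1 : ℝ) / ((α + 1) * s) ≤ t := by
      rw [neg_div]; simpa using ht1
    calc (-1 : ℝ) = (-1) / ((α + 1) * s) * ((α + 1) * s) := by field_simp
    _ ≤ t * ((α + 1) * s) := by
        exact mul_le_mul_of_nonneg_right this (le_of_lt hc)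
  have ht_lb : -(1 / 2 : ℝ) ≤ t := by nlinarith
  -- denominator is positive
  have hD : 0 < 1 + t * v := by nlinarith
  constructor
  · apply (div_le_div_iff_of_pos_right hD).mpr
    linarith
  · apply (div_le_div_iff_of_pos_right hD).mpr
    -- need : -t ≤ -((1+2*s*t)*(2*s-v)), i.e. 2s - v + 7t - 2stv ≤ 0
    have h1 : (s + 1) + t * (3 + 2 * s) ≤ 0 := by nlinarith
    have h2 : (s - 1 - v) * (1 + 2 * s * t) ≤ 0 := by
      apply mul_nonpos_of_nonneg_of_nonpos
      · linarith
      · nlinarith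
    nlinarith [h1, h2]
end

section
/- Let λ be a real number, and define 2×2 real matrices S = [[1, λ],[0, 1]] and T = [[0, −1],[1, 0]], and the sequence B_0 = 0, B_1 = 1, B_m = λ·B_{m−1} − B_{m−2} for m ≥ 2. Then for every integer n ≥ 1 one has (S⁻¹·T)^n = (−1)^{n+1}·[[−B_{n+1}, −B_n],[B_n, B_{n−1}]]; in particular, as a fractional linear transformation, (S⁻¹T)^n acts as z ↦ (−B_{n+1}·z − B_n)/(B_n·z + B_{n−1}). -/
/-- **Lemma 3.15.**  With `S = [[1,λ],[0,1]]`, `T = [[0,-1],[1,0]]` and the sequence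
`B_0 = 0`, `B_1 = 1`, `B_m = λB_{m-1} - B_{m-2}`, for every `n ≥ 1` one has
`(S⁻¹T)^n = (-1)^{n+1}·[[-B_{n+1}, -B_n],[B_n, B_{n-1}]]`; in particular, as a
fractional linear transformation, `(S⁻¹T)^n` acts as
`z ↦ (-B_{n+1}z - B_n)/(B_n z + B_{n-1})`. -/
theorem pow_S_inv_T (lam : ℝ) (B : ℕ → ℝ) (hB0 : B 0 = 0) (hB1 : B 1 = 1)
    (hB : ∀ m : ℕ, B (m + 2) = lam * B (m + 1) - B m)
    (S T : Matrix (Fin 2) (Fin 2) ℝ)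
    (hS : S = !![1, lam; 0, 1]) (hT : T = !![0, -1; 1, 0])
    (n : ℕ) (hn : 1 ≤ n) :
    (S⁻¹ * T) ^ n = (-1 : ℝ) ^ (n + 1) • !![-B (n + 1), -B n; B n, B (n - 1)] ∧
    ∀ z : ℝ, B n * z + B (n - 1) ≠ 0 →
      (((S⁻¹ * T) ^ n) 0 0 * z + ((S⁻¹ * T) ^ n) 0 1) /
          (((S⁻¹ * T) ^ n) 1 0 * z + ((S⁻¹ * T) ^ n) 1 1) =
        (-B (n + 1) * z - B n) / (B n * z + B (n - 1)) := by
  have hSinv : S⁻¹ = !![1, -lam; 0, 1] := by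
    apply Matrix.inv_eq_right_inv
    rw [hS]
    ext i j
    fin_cases i <;> fin_cases j <;>
      simp [Matrix.mul_apply, Fin.sum_univ_two]
  have hM : S⁻¹ * T = !![-lam, -1; 1, 0] := by
    rw [hSinv, hT]
    ext i j
    fin_cases i <;> fin_cases j <;>
      simp [Matrix.mul_apply, Fin.sum_univ_two]
  have key : ∀ m : ℕ, 1 ≤ m →
      (S⁻¹ * T) ^ m = (-1 : ℝ) ^ (m + 1) • !![-B (m + 1), -B m; B m, B (m - 1)] := by
    intro m hm
    induction m with
    | zero => omega
    | succ k ih =>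
      rcases Nat.eq_or_lt_of_le hm with h1 | h1
      · have hk : k = 0 := by omega
        subst hk
        have hB2 : B 2 = lam := by have := hB 0; simp [hB0, hB1] at this; linarith
        rw [pow_one, hM]
        ext i j
        fin_cases i <;> fin_cases j <;>
          simp [hB0, hB1, hB2]
      · have hk : 1 ≤ k := by omega
        have ihk := ih hk
        rw [pow_succ, ihk, hM]
        have hrec := hB (k - 1)
        have hk1 : k - 1 + 1 = k := by omega
        have hk2 : k - 1 + 2 = k + 1 := by omega
        rw [hk1, hk2] at hrec
        have hrec2 := hB k
        ext i j
        fin_cases i <;> fin_cases j <;>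
          · simp [Matrix.mul_apply, Fin.sum_univ_two, hrec2, hrec, Nat.add_comm 1 k]
            ring
  have hmat := key n hn
  refine ⟨hmat, fun z hz => ?_⟩
  have hsgn : ((-1 : ℝ) ^ (n + 1)) ≠ 0 := by positivity
  rw [hmat]
  have h2 : (-1:ℝ)^(n+1) * (B n) * z + (-1:ℝ)^(n+1) * (B (n-1)) ≠ 0 := by
    have he : (-1:ℝ)^(n+1) * (B n) * z + (-1:ℝ)^(n+1) * (B (n-1)) =
        (-1:ℝ)^(n+1) * (B n * z + B (n-1)) := by ring
    rw [he]; exact mul_ne_zero hsgn hz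
  norm_num [Matrix.smul_apply]
  rw [div_eq_div_iff h2 hz]
  ring
end

section
/- Let p ≥ 2 be an integer and λ = 2·cos(π/(2p)). With S = [[1, λ],[0, 1]], T = [[0, −1],[1, 0]] and B_0 = 0, B_1 = 1, B_m = λB_{m−1} − B_{m−2}, one has the matrix identity (S⁻¹T)^{p−2}·S⁻²·T = (−1)^p·(B_p/2)·[[−λ²−2, −λ],[λ³−λ, λ²−2]]; in particular, as a fractional linear transformation, (S⁻¹T)^{p−2}S⁻²T acts as z ↦ ((−λ²−2)z − λ)/((λ³−λ)z + λ²−2). -/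
/-- The matrix `ℳ = (S⁻¹T)^{p-2}·S⁻²·T` computed explicitly (cf. Lemma 3.16):
for `λ = 2cos(π/(2p))` one has
`(S⁻¹T)^{p-2}S⁻²T = (-1)^p·(B_p/2)·[[-λ²-2, -λ],[λ³-λ, λ²-2]]`; in particular, as a
fractional linear transformation it acts as
`z ↦ ((-λ²-2)z - λ)/((λ³-λ)z + λ²-2)`. -/
theorem M_matrix_explicit (p : ℕ) (hp : 2 ≤ p) (lam : ℝ)
    (hlam : lam = 2 * Real.cos (Real.pi / (2 * (p : ℝ))))
    (B : ℕ → ℝ) (hB0 : B 0 = 0) (hB1 : B 1 = 1)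
    (hB : ∀ m : ℕ, B (m + 2) = lam * B (m + 1) - B m)
    (S T : Matrix (Fin 2) (Fin 2) ℝ)
    (hS : S = !![1, lam; 0, 1]) (hT : T = !![0, -1; 1, 0]) :
    (S⁻¹ * T) ^ (p - 2) * S⁻¹ ^ 2 * T =
      ((-1 : ℝ) ^ p * (B p / 2)) •
        !![-lam ^ 2 - 2, -lam; lam ^ 3 - lam, lam ^ 2 - 2] ∧
    ∀ z : ℝ, (lam ^ 3 - lam) * z + lam ^ 2 - 2 ≠ 0 →
      (((S⁻¹ * T) ^ (p - 2) * S⁻¹ ^ 2 * T) 0 0 * z +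
          ((S⁻¹ * T) ^ (p - 2) * S⁻¹ ^ 2 * T) 0 1) /
        (((S⁻¹ * T) ^ (p - 2) * S⁻¹ ^ 2 * T) 1 0 * z +
          ((S⁻¹ * T) ^ (p - 2) * S⁻¹ ^ 2 * T) 1 1) =
        ((-lam ^ 2 - 2) * z - lam) / ((lam ^ 3 - lam) * z + lam ^ 2 - 2) := by
  obtain ⟨q, rfl⟩ : ∃ q, p = q + 2 := ⟨p - 2, by omega⟩
  clear hp
  set θ : ℝ := Real.pi / (2 * ((q + 2 : ℕ) : ℝ)) with hθ
  have hlam' : lam = 2 * Real.cos θ := hlam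
  have hpR : (0:ℝ) < ((q + 2 : ℕ) : ℝ) := by positivity
  have hθpos : 0 < θ := by
    rw [hθ]; positivity
  have hθlt : θ < Real.pi := by
    have h2 : (2:ℝ) ≤ ((q + 2 : ℕ) : ℝ) := by exact_mod_cast Nat.le_add_left 2 q
    rw [hθ, div_lt_iff₀ (by positivity)]
    nlinarith [Real.pi_pos]
  have hs : 0 < Real.sin θ := Real.sin_pos_of_pos_of_lt_pi hθpos hθlt
  have key : ∀ n : ℕ, B n * Real.sin θ = Real.sin ((n : ℝ) * θ) ∧
      B (n + 1) * Real.sin θ = Real.sin (((n + 1 : ℕ) : ℝ) * θ) := by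
    intro n
    induction n with
    | zero => constructor <;> simp [hB0, hB1]
    | succ n ih =>
      refine ⟨ih.2, ?_⟩
      have e1 : ((n + 2 : ℕ) : ℝ) * θ = ((n + 1 : ℕ) : ℝ) * θ + θ := by push_cast; ring
      have e2 : ((n : ℕ) : ℝ) * θ = ((n + 1 : ℕ) : ℝ) * θ - θ := by push_cast; ring
      have h1 := ih.1
      have h2 := ih.2
      rw [e2, Real.sin_sub] at h1
      rw [hB n, e1, Real.sin_add]
      linear_combination lam * h2 - h1 + Real.sin (((n + 1 : ℕ) : ℝ) * θ) * hlam'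
  have hBp : B (q + 2) * Real.sin θ = 1 := by
    rw [(key (q + 2)).1, show ((q + 2 : ℕ) : ℝ) * θ = Real.pi / 2 by
      rw [hθ]; field_simp, Real.sin_pi_div_two]
  have hBq1 : B (q + 1) * Real.sin θ = Real.cos θ := by
    rw [(key (q + 1)).1, show ((q + 1 : ℕ) : ℝ) * θ = Real.pi / 2 - θ by
      rw [hθ]; field_simp; push_cast; ring, Real.sin_pi_div_two_sub]
  have hkey : 2 * B (q + 1) = lam * B (q + 2) := by
    have : (2 * B (q + 1)) * Real.sin θ = (lam * B (q + 2)) * Real.sin θ := by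
      rw [mul_assoc, mul_assoc, hBq1, hBp, mul_one, hlam']
    exact mul_right_cancel₀ hs.ne' this
  have hBpne : B (q + 2) ≠ 0 := by
    intro h; rw [h, zero_mul] at hBp; norm_num at hBp
  -- matrices
  have hSinv : S⁻¹ = !![1, -lam; 0, 1] := by
    apply Matrix.inv_eq_right_inv
    rw [hS, Matrix.mul_fin_two, Matrix.one_fin_two]
    norm_num
  have hA : S⁻¹ * T = !![-lam, -1; 1, 0] := by
    rw [hSinv, hT]
    norm_num [Matrix.mul_fin_two]
  have hS2T : S⁻¹ ^ 2 * T = !![-(2 * lam), -1; 1, 0] := by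
    rw [sq, hSinv, hT, Matrix.mul_assoc]
    ext i j
    fin_cases i <;> fin_cases j <;> simp [Matrix.mul_fin_two] <;> ring
  have hpow : ∀ n : ℕ, (S⁻¹ * T) ^ n =
      ((-1 : ℝ) ^ n) • !![B (n + 1), B n; -B n, B (n + 1) - lam * B n] := by
    intro n
    induction n with
    | zero => simp [hB0, hB1, Matrix.one_fin_two]
    | succ n ih =>
      rw [pow_succ, ih, hA, Matrix.smul_mul]
      have hr' : B (n + 1 + 1) = lam * B (n + 1) - B n := hB n
      ext i j
      fin_cases i <;> fin_cases j <;>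
        simp [Matrix.mul_fin_two, Matrix.smul_apply] <;>
        first
        | linear_combination ((-1:ℝ) ^ n) * hr'
        | linear_combination (2 * (-1:ℝ) ^ n) * hr'
        | linear_combination (-2 * (-1:ℝ) ^ n) * hr'
        | linear_combination (-(-1:ℝ) ^ n) * hr'
        | ring
  have hmain : (S⁻¹ * T) ^ (q + 2 - 2) * S⁻¹ ^ 2 * T =
      ((-1 : ℝ) ^ (q + 2) * (B (q + 2) / 2)) •
        !![-lam ^ 2 - 2, -lam; lam ^ 3 - lam, lam ^ 2 - 2] := by
    have hq : q + 2 - 2 = q := by omega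
    rw [hq, Matrix.mul_assoc, hS2T, hpow q, Matrix.smul_mul]
    ext i j
    have hr := hB q
    fin_cases i <;> fin_cases j <;>
      simp [Matrix.mul_fin_two, Matrix.smul_apply]
    · linear_combination ((-1:ℝ)^q) * hr + (-(-1:ℝ)^q * lam / 2) * hkey
    · linear_combination ((-1:ℝ)^q / 2) * hkey
    · linear_combination ((-1:ℝ)^q * lam) * hr + ((-1:ℝ)^q * (1 + lam^2) / 2) * hkey
    · linear_combination ((-1:ℝ)^q) * hr + ((-1:ℝ)^q * lam / 2) * hkey
  refine ⟨hmain, ?_⟩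
  intro z hz
  have hc : ((-1 : ℝ) ^ (q + 2) * (B (q + 2) / 2)) ≠ 0 :=
    mul_ne_zero (pow_ne_zero _ (by norm_num)) (div_ne_zero hBpne two_ne_zero)
  set c := ((-1 : ℝ) ^ (q + 2) * (B (q + 2) / 2)) with hcdef
  have e00 : ((S⁻¹ * T) ^ (q + 2 - 2) * S⁻¹ ^ 2 * T) 0 0 = c * (-lam ^ 2 - 2) := by
    rw [hmain]; simp
  have e01 : ((S⁻¹ * T) ^ (q + 2 - 2) * S⁻¹ ^ 2 * T) 0 1 = c * (-lam) := by
    rw [hmain]; simp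
  have e10 : ((S⁻¹ * T) ^ (q + 2 - 2) * S⁻¹ ^ 2 * T) 1 0 = c * (lam ^ 3 - lam) := by
    rw [hmain]; simp
  have e11 : ((S⁻¹ * T) ^ (q + 2 - 2) * S⁻¹ ^ 2 * T) 1 1 = c * (lam ^ 2 - 2) := by
    rw [hmain]; simp
  rw [e00, e01, e10, e11,
    show c * (-lam ^ 2 - 2) * z + c * (-lam) = c * ((-lam ^ 2 - 2) * z - lam) by ring,
    show c * (lam ^ 3 - lam) * z + c * (lam ^ 2 - 2) = c * ((lam ^ 3 - lam) * z + lam ^ 2 - 2) by ring,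
    mul_div_mul_left _ _ hc]
end

section
/- Let q = 2p be even with p ≥ 3, λ = 2·cos(π/q), and α ∈ (1/2, 1/λ). Then the point (−1/(λ+1), λ−1) is a fixed point of 𝒯_α^{p−1}, i.e. 𝒯_α^{p−1}(−1/(λ+1), λ−1) = (−1/(λ+1), λ−1). -/
lemma rosen_step_aux (lam α N D v : ℝ) (hαpos : 0 < α) (hαl : α * lam < 1)
    (hlampos : 0 < lam) (hN : 0 < N) (hND : N < D) (hDl : D < lam * N) :
    rosenNE lam α (-(N / D), v) = (D / N - lam, 1 / (lam - v)) := by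
  have hD : 0 < D := hN.trans hND
  have ht : -(N / D) < 0 := by
    have : 0 < N / D := div_pos hN hD
    linarith
  have habs : |1 / (lam * -(N / D))| = D / (lam * N) := by
    have h1 : lam * -(N / D) = -(lam * N / D) := by ring
    rw [h1, one_div, abs_inv, abs_neg, abs_of_pos (by positivity), inv_div]
  have hd : rosenD lam α (-(N / D)) = 1 := by
    rw [rosenD, habs, Int.floor_eq_iff]
    have hlN : 0 < lam * N := by positivity
    constructor
    · have : α < D / (lam * N) := by
        rw [lt_div_iff₀ hlN]; nlinarith
      push_cast; linarith
    · have : D / (lam * N) < 1 := (div_lt_one hlN).mpr hDl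
      push_cast; linarith
  have hsign : Real.sign (-(N / D)) = -1 := Real.sign_of_neg ht
  simp only [rosenNE, rosenT, if_neg ht.ne, hd, hsign]
  rw [Prod.mk.injEq]
  constructor
  · push_cast
    field_simp
  · push_cast
    ring_nf

lemma rosen_base_aux (lam α v : ℝ) (hαpos : 0 < α) (hαl : α * lam < 1)
    (hlam1 : 1 < lam) :
    rosenNE lam α (-(1 / (lam + 1)), v) = (1 - lam, 1 / (2 * lam - v)) := by
  have hlampos : 0 < lam := by linarith
  have ht : -(1 / (lam + 1)) < 0 := by
    have : 0 < 1 / (lam + 1) := by positivity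
    linarith
  have habs : |1 / (lam * -(1 / (lam + 1)))| = (lam + 1) / lam := by
    have h1 : lam * -(1 / (lam + 1)) = -(lam / (lam + 1)) := by ring
    rw [h1, one_div, abs_inv, abs_neg, abs_of_pos (by positivity), inv_div]
  have hd : rosenD lam α (-(1 / (lam + 1))) = 2 := by
    rw [rosenD, habs, Int.floor_eq_iff]
    have h2 : (lam + 1) / lam = 1 + 1 / lam := by field_simp
    have h3 : 1 / lam < 1 := by rw [div_lt_one hlampos]; linarith
    have h4 : α < 1 / lam := by rw [lt_div_iff₀ hlampos]; linarith
    constructor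
    · push_cast; rw [h2]; linarith
    · push_cast; rw [h2]; linarith
  have hsign : Real.sign (-(1 / (lam + 1))) = -1 := Real.sign_of_neg ht
  simp only [rosenNE, rosenT, if_neg ht.ne, hd, hsign]
  rw [Prod.mk.injEq]
  constructor
  · push_cast
    field_simp
    ring
  · push_cast
    ring_nf


set_option maxHeartbeats 1000000 in
/-- **Corollary 3.18.**  For even `q = 2p`, `p ≥ 3`, `λ = 2cos(π/q)` and
`α ∈ (1/2, 1/λ)`, the point `(-1/(λ+1), λ-1)` is a fixed point of `𝒯_α^{p-1}`. -/
theorem fixed_point_of_round (p : ℕ) (hp : 3 ≤ p) (lam : ℝ)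
    (hlam : lam = 2 * Real.cos (Real.pi / (2 * (p : ℝ))))
    (α : ℝ) (hα : α ∈ Set.Ioo (1 / 2 : ℝ) (1 / lam)) :
    (rosenNE lam α)^[p - 1] (-(1 / (lam + 1)), lam - 1) =
      (-(1 / (lam + 1)), lam - 1) := by
  obtain ⟨hα1, hα2⟩ := hα
  obtain ⟨m, rfl⟩ : ∃ m, p = m + 3 := ⟨p - 3, by omega⟩
  set P : ℝ := (m : ℝ) + 3 with hPdef
  have hP3 : (3 : ℝ) ≤ P := by have : (0:ℝ) ≤ (m:ℝ) := Nat.cast_nonneg m; linarith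
  have hPpos : (0 : ℝ) < P := by linarith
  set θ : ℝ := Real.pi / (2 * P) with hθdef
  have hθpos : 0 < θ := by
    rw [hθdef]; positivity
  have hpθ : P * θ = Real.pi / 2 := by
    rw [hθdef]; field_simp
  have hθ6 : θ ≤ Real.pi / 6 := by
    rw [hθdef, div_le_div_iff₀ (by positivity) (by norm_num)]
    nlinarith [Real.pi_pos]
  have hlam' : lam = 2 * Real.cos θ := by
    rw [hlam, hθdef, hPdef]; push_cast; ring_nf
  have hcos : (1:ℝ)/2 < Real.cos θ := by
    have h3 : Real.cos θ > Real.cos (Real.pi / 3) := by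
      apply Real.cos_lt_cos_of_nonneg_of_le_pi hθpos.le
      · linarith [Real.pi_pos]
      · linarith [Real.pi_pos]
    rwa [Real.cos_pi_div_three] at h3
  have hlam1 : 1 < lam := by rw [hlam']; linarith
  have hlampos : 0 < lam := by linarith
  have hαpos : 0 < α := by linarith
  have hαl : α * lam < 1 := by
    have h := mul_lt_mul_of_pos_right hα2 hlampos
    rwa [one_div, inv_mul_cancel₀ hlampos.ne'] at h
  -- positivity of the relevant sines
  have hsin : ∀ x : ℝ, 0 < x → x < P → 0 < Real.sin (x * θ) := by
    intro x hx hxP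
    apply Real.sin_pos_of_pos_of_lt_pi (by positivity)
    have h1 : x * θ < P * θ := by nlinarith
    rw [hpθ] at h1
    linarith [Real.pi_pos]
  -- the basic three-term recurrence
  have hrec : ∀ x : ℝ,
      Real.sin ((x + 1) * θ) + Real.sin ((x - 1) * θ) = lam * Real.sin (x * θ) := by
    intro x
    have h1 : (x + 1) * θ = x * θ + θ := by ring
    have h2 : (x - 1) * θ = x * θ - θ := by ring
    rw [h1, h2, Real.sin_add, Real.sin_sub, hlam']; ring
  -- symmetry at the top
  have hsym : Real.sin ((P + 1/2) * θ) = Real.sin ((P - 1/2) * θ) := by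
    have e1 : (P + 1/2) * θ = Real.pi / 2 + 1/2 * θ := by rw [add_mul, hpθ]
    have e2 : (P - 1/2) * θ = Real.pi / 2 - 1/2 * θ := by rw [sub_mul, hpθ]
    rw [e1, e2, Real.sin_pi_div_two_sub, Real.sin_add, Real.sin_pi_div_two,
      Real.cos_pi_div_two]
    ring
  -- the two key identities
  have keyA : Real.sin ((3/2 : ℝ) * θ) = (lam + 1) * Real.sin ((1/2 : ℝ) * θ) := by
    have h := hrec (1/2)
    have e1 : ((1:ℝ)/2 + 1) * θ = (3/2 : ℝ) * θ := by ring
    have e2 : ((1:ℝ)/2 - 1) * θ = -((1/2 : ℝ) * θ) := by ring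
    rw [e1, e2, Real.sin_neg] at h
    linarith
  have keyB : Real.sin ((P - 3/2) * θ) = (lam - 1) * Real.sin ((P - 1/2) * θ) := by
    have h := hrec (P - 1/2)
    have e1 : (P - 1/2 + 1) * θ = (P + 1/2) * θ := by ring
    have e2 : (P - 1/2 - 1) * θ = (P - 3/2) * θ := by ring
    rw [e1, e2, hsym] at h
    linarith
  have hs12 : 0 < Real.sin ((1/2 : ℝ) * θ) := hsin _ (by norm_num) (by linarith)
  have hs32 : 0 < Real.sin ((3/2 : ℝ) * θ) := hsin _ (by norm_num) (by linarith)
  have hsP12 : 0 < Real.sin ((P - 1/2) * θ) := hsin _ (by linarith) (by linarith)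
  have halg1 : ∀ N D S l : ℝ, N ≠ 0 → D + S = l * N → D / N - l = -(S / N) := by
    intro N D S l h0 h
    field_simp
    linarith
  have halg2 : ∀ a b c l : ℝ, b ≠ 0 → c ≠ 0 → c + a = l * b → 1 / (l - a / b) = b / c := by
    intro a b c l hb hc h
    rw [show l - a / b = c / b by field_simp; linarith, one_div_div]
  -- the orbit
  set F : ℕ → ℝ × ℝ := fun k =>
    (-(Real.sin ((P - (k : ℝ) - 1/2) * θ) / Real.sin ((P - (k : ℝ) + 1/2) * θ)),
      Real.sin (((k : ℝ) - 1/2) * θ) / Real.sin (((k : ℝ) + 1/2) * θ)) with hFdef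
  have hstart : rosenNE lam α (-(1 / (lam + 1)), lam - 1) = F 1 := by
    rw [rosen_base_aux lam α _ hαpos hαl hlam1, hFdef]
    rw [Prod.mk.injEq]
    constructor
    · push_cast
      have e1 : (P - 1 - 1/2) * θ = (P - 3/2) * θ := by ring
      have e2 : (P - 1 + 1/2) * θ = (P - 1/2) * θ := by ring
      rw [e1, e2, keyB, mul_div_assoc, div_self hsP12.ne']
      ring
    · push_cast
      have e1 : ((1:ℝ) - 1/2) * θ = 1/2 * θ := by ring
      have e2 : ((1:ℝ) + 1/2) * θ = 3/2 * θ := by ring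
      rw [e1, e2, keyA, show 2 * lam - (lam - 1) = lam + 1 by ring,
        mul_comm (lam + 1), ← div_div, div_self hs12.ne']
  have hstep : ∀ k : ℕ, 1 ≤ k → k ≤ m + 1 → rosenNE lam α (F k) = F (k + 1) := by
    intro k hk1 hk2
    have hk1' : (1 : ℝ) ≤ (k : ℝ) := by exact_mod_cast hk1
    have hk2' : (k : ℝ) ≤ P - 2 := by
      have h : (k : ℝ) ≤ (m : ℝ) + 1 := by exact_mod_cast hk2
      rw [hPdef]; linarith
    have hNpos : 0 < Real.sin ((P - (k:ℝ) - 1/2) * θ) :=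
      hsin _ (by linarith) (by linarith)
    have hDpos : 0 < Real.sin ((P - (k:ℝ) + 1/2) * θ) :=
      hsin _ (by linarith) (by linarith)
    have hN3pos : 0 < Real.sin ((P - (k:ℝ) - 3/2) * θ) :=
      hsin _ (by linarith) (by linarith)
    have hreck := hrec (P - (k:ℝ) - 1/2)
    rw [show (P - (k:ℝ) - 1/2 + 1) * θ = (P - (k:ℝ) + 1/2) * θ by ring,
        show (P - (k:ℝ) - 1/2 - 1) * θ = (P - (k:ℝ) - 3/2) * θ by ring] at hreck
    have hDl : Real.sin ((P - (k:ℝ) + 1/2) * θ) < lam * Real.sin ((P - (k:ℝ) - 1/2) * θ) := by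
      linarith
    have hND : Real.sin ((P - (k:ℝ) - 1/2) * θ) < Real.sin ((P - (k:ℝ) + 1/2) * θ) := by
      apply Real.sin_lt_sin_of_lt_of_le_pi_div_two
      · have h := mul_pos (show (0:ℝ) < P - (k:ℝ) - 1/2 by linarith) hθpos
        linarith [Real.pi_pos]
      · rw [← hpθ]
        exact mul_le_mul_of_nonneg_right (by linarith) hθpos.le
      · exact mul_lt_mul_of_pos_right (by linarith) hθpos
    -- positivity for the second coordinate
    have hbpos : 0 < Real.sin (((k:ℝ) + 1/2) * θ) := hsin _ (by linarith) (by linarith)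
    have hcpos : 0 < Real.sin (((k:ℝ) + 3/2) * θ) := hsin _ (by linarith) (by linarith)
    have hapos : 0 < Real.sin (((k:ℝ) - 1/2) * θ) := hsin _ (by linarith) (by linarith)
    have hreck2 := hrec ((k:ℝ) + 1/2)
    rw [show ((k:ℝ) + 1/2 + 1) * θ = ((k:ℝ) + 3/2) * θ by ring,
        show ((k:ℝ) + 1/2 - 1) * θ = ((k:ℝ) - 1/2) * θ by ring] at hreck2
    simp only [hFdef]
    rw [rosen_step_aux lam α _ _ _ hαpos hαl hlampos hNpos hND hDl]
    rw [Prod.mk.injEq]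
    constructor
    · push_cast
      rw [show (P - ((k:ℝ) + 1) - 1/2) * θ = (P - (k:ℝ) - 3/2) * θ by ring,
          show (P - ((k:ℝ) + 1) + 1/2) * θ = (P - (k:ℝ) - 1/2) * θ by ring]
      exact halg1 _ _ _ _ hNpos.ne' hreck
    · push_cast
      rw [show ((k:ℝ) + 1 - 1/2) * θ = ((k:ℝ) + 1/2) * θ by ring,
          show ((k:ℝ) + 1 + 1/2) * θ = ((k:ℝ) + 3/2) * θ by ring]
      exact halg2 _ _ _ _ hbpos.ne' hcpos.ne' hreck2
  have hiter : ∀ j : ℕ, j ≤ m + 1 → (rosenNE lam α)^[j] (F 1) = F (1 + j) := by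
    intro j hj
    induction j with
    | zero => simp
    | succ n ih =>
      rw [Function.iterate_succ_apply', ih (by omega), hstep (1 + n) (by omega) (by omega)]
      congr 1
  have hend : F (1 + (m + 1)) = (-(1 / (lam + 1)), lam - 1) := by
    simp only [hFdef]
    rw [Prod.mk.injEq]
    constructor
    · push_cast
      rw [show (P - ((1:ℝ) + ((m:ℝ) + 1)) - 1/2) * θ = 1/2 * θ by rw [hPdef]; ring,
          show (P - ((1:ℝ) + ((m:ℝ) + 1)) + 1/2) * θ = 3/2 * θ by rw [hPdef]; ring]
      rw [keyA, mul_comm (lam + 1), ← div_div, div_self hs12.ne']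
    · push_cast
      rw [show ((1:ℝ) + ((m:ℝ) + 1) - 1/2) * θ = (P - 3/2) * θ by rw [hPdef]; ring,
          show ((1:ℝ) + ((m:ℝ) + 1) + 1/2) * θ = (P - 1/2) * θ by rw [hPdef]; ring]
      rw [keyB, mul_div_assoc, div_self hsP12.ne', mul_one]
  rw [show m + 3 - 1 = (m + 1) + 1 from rfl, Function.iterate_succ_apply, hstart,
    hiter (m + 1) le_rfl, hend]
end
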